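/- arXiv:1312.7151 — 10 statements merged into one kernel-verified Lean document; each statement's English description precedes it below -/
import Mathlib

section
/- For any increasing sequence q = (q_n) of positive integers and any sequence u = (u_n) of positive reals tending to infinity, every element of S_{q,u} is a Liouville number. -/
/-!
Since `b_n ≤ q_n ^ κ₁` and `q_n, u_n → ∞`, for each exponent `N` the bound
`‖b_n ξ‖ ≤ q_n ^ (-κ₂ u_n)` eventually beats `(2 b_n) ^ (-N) ≥ q_n ^ (-(κ₁ + 1) N)`. With `a` the
integer nearest to `b_n ξ`, the fraction `2a / 2b_n` is then within `(2 b_n) ^ (-N)` of `ξ`.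
-/

open Filter

/-- Distance from a real number to the nearest integer. -/
noncomputable def distNearestInt (x : ℝ) : ℝ := |x - round x|

/-- The Liouville set `S_{q,u}` attached to a sequence `q` of positive integers and a
sequence `u` of positive reals. -/
def LSet (q : ℕ → ℕ) (u : ℕ → ℝ) : Set ℝ :=
  {ξ : ℝ | Irrational ξ ∧ ∃ κ₁ κ₂ : ℝ, 0 < κ₁ ∧ 0 < κ₂ ∧ ∃ b : ℕ → ℕ,
    ∀ᶠ n in Filter.atTop, 1 ≤ b n ∧ (b n : ℝ) ≤ (q n : ℝ) ^ κ₁ ∧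
      distNearestInt ((b n : ℝ) * ξ) ≤ (q n : ℝ) ^ (-(κ₂ * u n))}

/-- The denominator is doubled because `b` itself may be `1`, while `Liouville` asks for `1 < b`. -/
theorem Liouville.of_distNearestInt_lt {ξ : ℝ} (hξ : Irrational ξ)
    (h : ∀ n : ℕ, ∃ b : ℕ, 1 ≤ b ∧ distNearestInt (b * ξ) < 1 / (2 * b : ℝ) ^ n) :
    Liouville ξ := by
  intro n
  obtain ⟨b, hb, hlt⟩ := h n
  have hb0 : (0 : ℝ) < b := by exact_mod_cast hb
  set a := round ((b : ℝ) * ξ)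
  refine ⟨2 * a, 2 * b, by omega, (irrational_iff_ne_rational ξ).1 hξ _ _ (by omega), ?_⟩
  have hdiff : ξ - ((2 * a : ℤ) : ℝ) / ((2 * b : ℤ) : ℝ) = (b * ξ - a) / b := by
    push_cast
    field_simp
  calc |ξ - ((2 * a : ℤ) : ℝ) / ((2 * b : ℤ) : ℝ)| = distNearestInt (b * ξ) / b := by
        rw [hdiff, abs_div, abs_of_pos hb0, distNearestInt]
    _ ≤ distNearestInt (b * ξ) := div_le_self (abs_nonneg _) (by exact_mod_cast hb)
    _ < 1 / ((2 * b : ℤ) : ℝ) ^ n := by push_cast; exact hlt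

theorem rpow_neg_lt_one_div_two_mul_pow {Q B κ t : ℝ} (n : ℕ) (hQ : 2 ≤ Q) (hB0 : 0 < B)
    (hB : B ≤ Q ^ κ) (ht : (κ + 1) * n < t) : Q ^ (-t) < 1 / (2 * B) ^ n := by
  have hQ0 : 0 < Q := by linarith
  calc Q ^ (-t) < Q ^ (-((κ + 1) * n)) :=
        Real.rpow_lt_rpow_of_exponent_lt (by linarith) (by linarith)
    _ = 1 / (Q ^ (κ + 1)) ^ n := by
        rw [Real.rpow_neg hQ0.le, ← Real.rpow_natCast, ← Real.rpow_mul hQ0.le, one_div]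
    _ ≤ 1 / (2 * B) ^ n := by
        gcongr
        calc 2 * B ≤ Q * Q ^ κ := by gcongr
          _ = Q ^ (κ + 1) := by rw [Real.rpow_add_one hQ0.ne']; ring

theorem LSet_subset_liouville_general (q : ℕ → ℕ) (u : ℕ → ℝ)
    (hq : StrictMono q) (hu : Filter.Tendsto u Filter.atTop Filter.atTop) :
    ∀ ξ ∈ LSet q u, Liouville ξ := by
  rintro ξ ⟨hξ, κ₁, κ₂, -, hκ₂, b, hb⟩
  refine Liouville.of_distNearestInt_lt hξ fun n => ?_
  have hq2 : ∀ᶠ m in atTop, 2 ≤ q m := hq.tendsto_atTop.eventually_ge_atTop 2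
  have hexp : ∀ᶠ m in atTop, (κ₁ + 1) * n < κ₂ * u m :=
    (hu.const_mul_atTop hκ₂).eventually_gt_atTop _
  obtain ⟨m, ⟨hb1, hbq, hdist⟩, hqm, hum⟩ := (hb.and (hq2.and hexp)).exists
  exact ⟨b m, hb1, hdist.trans_lt <|
    rpow_neg_lt_one_div_two_mul_pow n (by exact_mod_cast hqm) (by positivity) hbq hum⟩

/-- Every element of S_{q,u} is a Liouville number. -/
theorem LSet_subset_liouville (q : ℕ → ℕ) (u : ℕ → ℝ)
    (hq : StrictMono q) (hqpos : ∀ n, 0 < q n)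
    (hupos : ∀ n, 0 < u n) (hu : Filter.Tendsto u Filter.atTop Filter.atTop) :
    ∀ ξ ∈ LSet q u, Liouville ξ :=
  LSet_subset_liouville_general q u hq hu
end

section
/- If ξ belongs to S_{q,u}, then 1/ξ belongs to S_{q,u}. -/
open Filter

/-!
If `|b ξ - a| ≤ ε` with `a = round (b ξ)`, dividing by `ξ` gives `|a / ξ - b| ≤ ε / |ξ|`, so the
integer `|a|` approximates `1 / ξ` just as `b` approximates `ξ`. Once `ε < |ξ|` we have `a ≠ 0`,
and `|a| ≤ b |ξ| + 1/2`. Since `q n ^ (κ₂ u n) → ∞`, the loss of the factor `1 / |ξ|` is absorbed by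
halving `κ₂`, and the factor `|ξ| + 1/2` by raising `κ₁` to `κ₁ + 1`.
-/

theorem distNearestInt_le (x : ℝ) (m : ℤ) : distNearestInt x ≤ |x - m| := round_le x m

theorem distNearestInt_neg (x : ℝ) : distNearestInt (-x) = distNearestInt x := by
  refine le_antisymm ?_ ?_
  · calc distNearestInt (-x) ≤ |-x - ((-round x : ℤ) : ℝ)| := distNearestInt_le _ _
      _ = distNearestInt x := by rw [distNearestInt, ← abs_neg]; push_cast; ring_nf
  · calc distNearestInt x ≤ |x - ((-round (-x) : ℤ) : ℝ)| := distNearestInt_le _ _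
      _ = distNearestInt (-x) := by rw [distNearestInt, ← abs_neg]; push_cast; ring_nf

theorem round_ne_zero_of_distNearestInt_lt_abs {x : ℝ} (h : distNearestInt x < |x|) :
    round x ≠ 0 := by
  intro h0
  simp [distNearestInt, h0] at h

theorem abs_round_le (x : ℝ) : |(round x : ℝ)| ≤ |x| + 1 / 2 := by
  have := abs_sub_round x
  have := abs_sub_abs_le_abs_sub (round x : ℝ) x
  rw [abs_sub_comm] at this
  linarith

theorem distNearestInt_natAbs_mul_inv_le {ξ : ℝ} (hξ : ξ ≠ 0) (a b : ℤ) :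
    distNearestInt (a.natAbs * (1 / ξ)) ≤ |b * ξ - a| / |ξ| := by
  have hsymm : distNearestInt (a.natAbs * (1 / ξ)) = distNearestInt (a / ξ) := by
    rw [Nat.cast_natAbs, Int.cast_abs, ← div_eq_mul_one_div]
    rcases abs_choice (a : ℝ) with h | h <;> simp only [h, neg_div, distNearestInt_neg]
  calc distNearestInt (a.natAbs * (1 / ξ)) = distNearestInt (a / ξ) := hsymm
    _ ≤ |a / ξ - b| := distNearestInt_le _ _
    _ = |b * ξ - a| / |ξ| := by
      rw [← abs_div, ← abs_neg]; congr 1; field_simp; ring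

theorem natAbs_round_approx_inv {ξ K ε : ℝ} {b : ℕ} (hξ : ξ ≠ 0) (hb : 1 ≤ b) (hbK : b ≤ K)
    (hd : distNearestInt (b * ξ) ≤ ε) (hε : ε < |ξ|) :
    1 ≤ (round (b * ξ)).natAbs ∧ ((round (b * ξ)).natAbs : ℝ) ≤ K * |ξ| + 1 / 2 ∧
      distNearestInt ((round (b * ξ)).natAbs * (1 / ξ)) ≤ ε / |ξ| := by
  have hbξ : |ξ| ≤ |b * ξ| := by
    rw [abs_mul, Nat.abs_cast]
    exact le_mul_of_one_le_left (abs_nonneg ξ) (by exact_mod_cast hb)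
  refine ⟨Int.natAbs_pos.mpr (round_ne_zero_of_distNearestInt_lt_abs (by linarith)), ?_, ?_⟩
  · rw [Nat.cast_natAbs, Int.cast_abs]
    calc |(round (b * ξ) : ℝ)| ≤ |b * ξ| + 1 / 2 := abs_round_le _
      _ ≤ K * |ξ| + 1 / 2 := by rw [abs_mul, Nat.abs_cast]; gcongr
  · calc _ ≤ |(b : ℤ) * ξ - round (b * ξ)| / |ξ| := distNearestInt_natAbs_mul_inv_le hξ _ _
      _ ≤ ε / |ξ| := by push_cast; exact div_le_div_of_nonneg_right hd (abs_nonneg ξ)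

theorem tendsto_rpow_of_tendsto_atTop {α : Type*} {l : Filter α} {f g : α → ℝ}
    (hf : Tendsto f l atTop) (hg : Tendsto g l atTop) :
    Tendsto (fun x => f x ^ g x) l atTop := by
  refine tendsto_atTop_mono' l ?_ ((tendsto_rpow_atTop_of_base_gt_one 2 one_lt_two).comp hg)
  filter_upwards [hf.eventually_ge_atTop 2, hg.eventually_ge_atTop 0] with x hfx hgx
  exact Real.rpow_le_rpow zero_le_two hfx hgx

theorem tendsto_rpow_neg_of_tendsto_atTop {α : Type*} {l : Filter α} {f g : α → ℝ}
    (hf : Tendsto f l atTop) (hg : Tendsto g l atTop) :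
    Tendsto (fun x => f x ^ (-g x)) l (nhds 0) := by
  refine (tendsto_inv_atTop_zero.comp (tendsto_rpow_of_tendsto_atTop hf hg)).congr' ?_
  filter_upwards [hf.eventually_ge_atTop 0] with x hfx
  exact (Real.rpow_neg hfx _).symm

theorem rpow_neg_mul_div_le {x c t δ : ℝ} (hx : 0 < x) (hδ : 0 < δ)
    (h : x ^ (-(c / 2 * t)) ≤ δ) : x ^ (-(c * t)) / δ ≤ x ^ (-(c / 2 * t)) := by
  rw [div_le_iff₀ hδ, show -(c * t) = -(c / 2 * t) + -(c / 2 * t) by ring,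
    Real.rpow_add hx]
  exact mul_le_mul_of_nonneg_left h (by positivity)

theorem mul_add_le_rpow_add_one {x κ y : ℝ} (hx : 1 ≤ x) (hκ : 0 ≤ κ)
    (hyx : y + 1 / 2 ≤ x) : x ^ κ * y + 1 / 2 ≤ x ^ (κ + 1) := by
  have h1 : 1 ≤ x ^ κ := Real.one_le_rpow hx hκ
  calc x ^ κ * y + 1 / 2 ≤ x ^ κ * (y + 1 / 2) := by nlinarith
    _ ≤ x ^ κ * x := by gcongr
    _ = x ^ (κ + 1) := by rw [Real.rpow_add (by linarith), Real.rpow_one]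

theorem LSet_inv_mem_general (q : ℕ → ℕ) (u : ℕ → ℝ)
    (hq : StrictMono q)
    (hu : Filter.Tendsto u Filter.atTop Filter.atTop)
    (ξ : ℝ) (hξ : ξ ∈ LSet q u) : 1 / ξ ∈ LSet q u := by
  obtain ⟨hirr, κ₁, κ₂, hκ₁, hκ₂, b, hb⟩ := hξ
  have hξ0 : 0 < |ξ| := abs_pos.mpr hirr.ne_zero
  have hqt : Tendsto (fun n => (q n : ℝ)) atTop atTop :=
    tendsto_natCast_atTop_atTop.comp hq.tendsto_atTop
  have hsmall : ∀ c, 0 < c → ∀ᶠ n in atTop, (q n : ℝ) ^ (-(c * u n)) < |ξ| := fun c hc =>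
    (tendsto_rpow_neg_of_tendsto_atTop hqt (hu.const_mul_atTop hc)).eventually_lt_const hξ0
  refine ⟨one_div ξ ▸ hirr.inv, κ₁ + 1, κ₂ / 2, by linarith, by linarith,
    fun n => (round (b n * ξ)).natAbs, ?_⟩
  filter_upwards [hb, hsmall κ₂ hκ₂, hsmall (κ₂ / 2) (by linarith),
    hqt.eventually_ge_atTop (|ξ| + 1 / 2), hqt.eventually_ge_atTop 1]
    with n ⟨hb1, hbK, hd⟩ hε hε' hqξ hq1
  obtain ⟨ha1, haK, had⟩ := natAbs_round_approx_inv hirr.ne_zero hb1 hbK hd hε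
  exact ⟨ha1, haK.trans (mul_add_le_rpow_add_one hq1 hκ₁.le hqξ),
    had.trans (rpow_neg_mul_div_le (by linarith) hξ0 hε'.le)⟩

/-- If ξ ∈ S_{q,u} then 1/ξ ∈ S_{q,u}. -/
theorem LSet_inv_mem (q : ℕ → ℕ) (u : ℕ → ℝ)
    (hq : StrictMono q) (hqpos : ∀ n, 0 < q n)
    (hupos : ∀ n, 0 < u n) (humono : StrictMono u)
    (hu : Filter.Tendsto u Filter.atTop Filter.atTop)
    (ξ : ℝ) (hξ : ξ ∈ LSet q u) : 1 / ξ ∈ LSet q u :=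
  LSet_inv_mem_general q u hq hu ξ hξ
end

section
/- If ξ ∈ S_{q,u} and r is a nonzero rational number, then rξ ∈ S_{q,u}. -/
open Filter

/-! Clearing the denominator of `r = a / d`: if `b ξ` is within `q^{-κ u}` of an integer, then
`(d b) (r ξ) = a (b ξ)` is within `|a| q^{-κ u} ≤ q^{-κ u / 2}` of one once `q ≥ |a|` and
`κ u ≥ 2`, while the denominators grow only by the factor `d ≤ q`. -/

lemma distNearestInt_int_mul_le (m : ℤ) (x : ℝ) :
    distNearestInt ((m : ℝ) * x) ≤ |(m : ℝ)| * distNearestInt x := by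
  unfold distNearestInt
  calc |(m : ℝ) * x - round ((m : ℝ) * x)| ≤ |(m : ℝ) * x - ((m * round x : ℤ) : ℝ)| :=
        round_le _ _
    _ = |(m : ℝ)| * |x - round x| := by
        push_cast
        rw [← abs_mul]
        ring_nf

lemma distNearestInt_den_mul_ratCast_mul_le (r : ℚ) (x : ℝ) :
    distNearestInt ((r.den : ℝ) * ((r : ℝ) * x)) ≤ |(r.num : ℝ)| * distNearestInt x := by
  have hden : (r.den : ℝ) ≠ 0 := Nat.cast_ne_zero.2 r.den_ne_zero
  have hclear : (r.den : ℝ) * ((r : ℝ) * x) = (r.num : ℝ) * x := by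
    rw [Rat.cast_def]
    field_simp
  exact hclear ▸ distNearestInt_int_mul_le r.num x

lemma self_mul_rpow_neg_le_rpow_neg_half {Q s : ℝ} (hQ : 1 ≤ Q) (hs : 2 ≤ s) :
    Q * Q ^ (-s) ≤ Q ^ (-(s / 2)) := by
  calc Q * Q ^ (-s) = Q ^ (1 + -s) := by
        rw [Real.rpow_add (by linarith), Real.rpow_one]
    _ ≤ Q ^ (-(s / 2)) := Real.rpow_le_rpow_of_exponent_le hQ (by linarith)

theorem LSet_rat_mul_mem_general (q : ℕ → ℕ) (u : ℕ → ℝ)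
    (hq : StrictMono q) (hu : Filter.Tendsto u Filter.atTop Filter.atTop)
    (ξ : ℝ) (hξ : ξ ∈ LSet q u) (r : ℚ) (hr : r ≠ 0) : (r : ℝ) * ξ ∈ LSet q u := by
  obtain ⟨hirr, κ₁, κ₂, hκ₁, hκ₂, b, hb⟩ := hξ
  refine ⟨hirr.ratCast_mul hr, κ₁ + 1, κ₂ / 2, by positivity, by positivity,
    fun n => r.den * b n, ?_⟩
  have hq_large : ∀ᶠ n in atTop, max 1 (max (r.den : ℝ) |(r.num : ℝ)|) ≤ q n :=
    (tendsto_natCast_atTop_atTop.comp hq.tendsto_atTop).eventually_ge_atTop _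
  have hu_large : ∀ᶠ n in atTop, 2 ≤ κ₂ * u n :=
    (hu.const_mul_atTop hκ₂).eventually_ge_atTop 2
  filter_upwards [hb, hq_large, hu_large] with n ⟨hb_pos, hb_le, hb_dist⟩ hqn hun
  rw [max_le_iff, max_le_iff] at hqn
  obtain ⟨hq_one, hq_den, hq_num⟩ := hqn
  refine ⟨Nat.mul_pos r.den_pos hb_pos, ?_, ?_⟩
  · push_cast
    rw [Real.rpow_add_one (by positivity), mul_comm _ (q n : ℝ)]
    exact mul_le_mul hq_den hb_le (by positivity) (by positivity)
  · calc distNearestInt (((r.den * b n : ℕ) : ℝ) * ((r : ℝ) * ξ))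
        = distNearestInt ((r.den : ℝ) * ((r : ℝ) * ((b n : ℝ) * ξ))) := by push_cast; ring_nf
      _ ≤ |(r.num : ℝ)| * distNearestInt ((b n : ℝ) * ξ) :=
          distNearestInt_den_mul_ratCast_mul_le r _
      _ ≤ q n * (q n : ℝ) ^ (-(κ₂ * u n)) :=
          mul_le_mul hq_num hb_dist (by unfold distNearestInt; positivity) (by positivity)
      _ ≤ (q n : ℝ) ^ (-(κ₂ / 2 * u n)) := by
          rw [div_mul_eq_mul_div]
          exact self_mul_rpow_neg_le_rpow_neg_half hq_one hun

/-- If ξ ∈ S_{q,u} and r is a nonzero rational, then rξ ∈ S_{q,u}. -/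
theorem LSet_rat_mul_mem (q : ℕ → ℕ) (u : ℕ → ℝ)
    (hq : StrictMono q) (hqpos : ∀ n, 0 < q n)
    (hupos : ∀ n, 0 < u n) (hu : Filter.Tendsto u Filter.atTop Filter.atTop)
    (ξ : ℝ) (hξ : ξ ∈ LSet q u) (r : ℚ) (hr : r ≠ 0) : (r : ℝ) * ξ ∈ LSet q u :=
  LSet_rat_mul_mem_general q u hq hu ξ hξ r hr
end

section
/- If ξ, ξ' ∈ S_{q,u} and ξ − ξ' is irrational, then ξ − ξ' ∈ S_{q,u}. -/
open Filter

/-! The product `b b'` of the two denominators works for `ξ - ξ'`: since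
`b b' (ξ - ξ') = b' (b ξ) - b (b' ξ')`, the distance to the nearest integer is at most
`b' ‖b ξ‖ + b ‖b' ξ'‖ ≤ q ^ (κ₁' - κ₂ u) + q ^ (κ₁ - κ₂' u)`. As `u → ∞` and `q n ≥ n`, each term is
eventually below `q ^ (-K u) / 2` for `K = min κ₂ κ₂' / 2`. -/

lemma distNearestInt_nonneg (x : ℝ) : 0 ≤ distNearestInt x := abs_nonneg _

lemma distNearestInt_le_abs_sub_intCast (x : ℝ) (k : ℤ) : distNearestInt x ≤ |x - k| :=
  round_le x k

lemma distNearestInt_sub_le (x y : ℝ) :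
    distNearestInt (x - y) ≤ distNearestInt x + distNearestInt y := by
  calc distNearestInt (x - y) ≤ |x - y - ↑(round x - round y)| :=
        distNearestInt_le_abs_sub_intCast _ _
    _ = |(x - round x) - (y - round y)| := by push_cast; ring_nf
    _ ≤ distNearestInt x + distNearestInt y := abs_sub _ _

lemma distNearestInt_natCast_mul_le (n : ℕ) (x : ℝ) :
    distNearestInt (n * x) ≤ n * distNearestInt x := by
  calc distNearestInt (n * x) ≤ |n * x - ↑(n * round x)| :=
        distNearestInt_le_abs_sub_intCast _ _
    _ = n * distNearestInt x := by
        rw [distNearestInt, Int.cast_mul, Int.cast_natCast, ← mul_sub, abs_mul, Nat.abs_cast]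

lemma distNearestInt_natCast_mul_mul_sub_le (a b : ℕ) (x y : ℝ) :
    distNearestInt (↑(a * b) * (x - y)) ≤
      b * distNearestInt (a * x) + a * distNearestInt (b * y) := by
  calc distNearestInt (↑(a * b) * (x - y)) = distNearestInt (b * (a * x) - a * (b * y)) := by
        push_cast; ring_nf
    _ ≤ _ := (distNearestInt_sub_le _ _).trans <|
        add_le_add (distNearestInt_natCast_mul_le _ _) (distNearestInt_natCast_mul_le _ _)

lemma eventually_rpow_mul_rpow_neg_le_half {ι : Type*} {l : Filter ι} {Q u : ι → ℝ}
    (hQ : ∀ᶠ i in l, 2 ≤ Q i) (hu : Tendsto u l atTop) (κ : ℝ) {K κ₂ : ℝ} (hK : K < κ₂) :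
    ∀ᶠ i in l, Q i ^ κ * Q i ^ (-(κ₂ * u i)) ≤ Q i ^ (-(K * u i)) / 2 := by
  have hexp : ∀ᶠ i in l, κ + (K - κ₂) * u i ≤ -1 := by
    filter_upwards [(hu.const_mul_atTop (sub_pos.2 hK)).eventually_ge_atTop (κ + 1)] with i hi
    linarith
  filter_upwards [hQ, hexp] with i hQi hi
  have hQpos : 0 < Q i := by linarith
  calc Q i ^ κ * Q i ^ (-(κ₂ * u i)) = Q i ^ (κ + (K - κ₂) * u i) * Q i ^ (-(K * u i)) := by
        rw [← Real.rpow_add hQpos, ← Real.rpow_add hQpos]; ring_nf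
    _ ≤ Q i ^ (-1 : ℝ) * Q i ^ (-(K * u i)) := by
        gcongr
        linarith
    _ ≤ 2⁻¹ * Q i ^ (-(K * u i)) := by
        gcongr
        rw [Real.rpow_neg_one]
        exact inv_anti₀ two_pos hQi
    _ = Q i ^ (-(K * u i)) / 2 := by ring

theorem LSet_sub_mem_general (q : ℕ → ℕ) (u : ℕ → ℝ)
    (hq : StrictMono q) (hu : Filter.Tendsto u Filter.atTop Filter.atTop)
    (ξ ξ' : ℝ) (hξ : ξ ∈ LSet q u) (hξ' : ξ' ∈ LSet q u)
    (hirr : Irrational (ξ - ξ')) : ξ - ξ' ∈ LSet q u := by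
  obtain ⟨-, κ₁, κ₂, hκ₁, hκ₂, b, hb⟩ := hξ
  obtain ⟨-, κ₁', κ₂', hκ₁', hκ₂', b', hb'⟩ := hξ'
  set K := min κ₂ κ₂' / 2
  have hq2 : ∀ᶠ n in atTop, (2 : ℝ) ≤ q n := by
    filter_upwards [eventually_ge_atTop 2] with n hn
    exact_mod_cast hn.trans hq.le_apply
  refine ⟨hirr, κ₁ + κ₁', K, by positivity, by positivity, fun n => b n * b' n, ?_⟩
  filter_upwards [hb, hb', hq2,
    eventually_rpow_mul_rpow_neg_le_half hq2 hu κ₁' (by grind : K < κ₂),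
    eventually_rpow_mul_rpow_neg_le_half hq2 hu κ₁ (by grind : K < κ₂')]
    with n ⟨hb1, hbq, hbξ⟩ ⟨hb1', hbq', hbξ'⟩ hqn hsmall hsmall'
  have hqpos : (0 : ℝ) < q n := by linarith
  refine ⟨Nat.mul_le_mul hb1 hb1', ?_, ?_⟩
  · push_cast
    rw [Real.rpow_add hqpos]
    exact mul_le_mul hbq hbq' (by positivity) (by positivity)
  · calc distNearestInt (↑(b n * b' n) * (ξ - ξ'))
        ≤ b' n * distNearestInt (b n * ξ) + b n * distNearestInt (b' n * ξ') :=
          distNearestInt_natCast_mul_mul_sub_le _ _ _ _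
      _ ≤ (q n : ℝ) ^ κ₁' * (q n : ℝ) ^ (-(κ₂ * u n))
          + (q n : ℝ) ^ κ₁ * (q n : ℝ) ^ (-(κ₂' * u n)) := by
          gcongr
          · exact distNearestInt_nonneg _
          · exact distNearestInt_nonneg _
      _ ≤ (q n : ℝ) ^ (-(K * u n)) / 2 + (q n : ℝ) ^ (-(K * u n)) / 2 :=
          add_le_add hsmall hsmall'
      _ = (q n : ℝ) ^ (-(K * u n)) := add_halves _

/-- If ξ, ξ' ∈ S_{q,u} and ξ − ξ' is irrational, then ξ − ξ' ∈ S_{q,u}. -/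
theorem LSet_sub_mem (q : ℕ → ℕ) (u : ℕ → ℝ)
    (hq : StrictMono q) (hqpos : ∀ n, 0 < q n)
    (hupos : ∀ n, 0 < u n) (hu : Filter.Tendsto u Filter.atTop Filter.atTop)
    (ξ ξ' : ℝ) (hξ : ξ ∈ LSet q u) (hξ' : ξ' ∈ LSet q u)
    (hirr : Irrational (ξ - ξ')) : ξ - ξ' ∈ LSet q u :=
  LSet_sub_mem_general q u hq hu ξ ξ' hξ hξ' hirr
end

section
/- Let R ∈ ℚ(X) be a rational function with rational coefficients and let ξ be a Liouville number at which R is defined. Then R(ξ) is either a rational number or a Liouville number. -/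
/-!
Write R(ξ) = P(ξ)/Q(ξ) with P, Q ∈ ℤ[X] of degree at most d. Near ξ the map t ↦ P(t)/Q(t) is
Lipschitz, and it sends a fraction a/b to the fraction b^d P(a/b) / b^d Q(a/b), whose denominator
is O(b^d). Hence a Liouville approximation |ξ - a/b| < b^(-k) of ξ yields an approximation of R(ξ)
with error O(b^(-k)) by a fraction with denominator q = O(b^d), and the error is below q^(-n) as
soon as k exceeds dn by enough.
-/

open Polynomial Topology

theorem Int.exists_one_lt_div_eq {K : Type*} [Field K] [CharZero K] (m : ℤ) {n : ℤ}
    (hn : n ≠ 0) : ∃ p q : ℤ, 1 < q ∧ q ≤ 2 * |n| ∧ (p / q : K) = m / n := by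
  rcases hn.lt_or_gt with hn | hn
  · refine ⟨-2 * m, -2 * n, by omega, by rw [abs_of_neg hn]; omega, ?_⟩
    push_cast
    exact mul_div_mul_left _ _ (by norm_num)
  · refine ⟨2 * m, 2 * n, by omega, by rw [abs_of_pos hn], ?_⟩
    push_cast
    exact mul_div_mul_left _ _ two_ne_zero

theorem Polynomial.exists_int_eq_pow_mul_aeval_div {K : Type*} [Field K] [CharZero K]
    (P : ℤ[X]) {d : ℕ} (hd : P.natDegree ≤ d) (a : ℤ) {b : ℤ} (hb : b ≠ 0) :
    ∃ D : ℤ, (D : K) = b ^ d * aeval ((a : K) / b) P := by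
  obtain ⟨D, bi, hbi, hD⟩ := denomsClearable_of_natDegree_le (i := algebraMap ℤ K) (b := b) d a
    (bi := (b : K)⁻¹) (by simp [hb]) P hd
  refine ⟨D, ?_⟩
  rw [eq_inv_of_mul_eq_one_left hbi] at hD
  simpa [aeval_def, eval_map, div_eq_mul_inv] using hD

theorem Polynomial.exists_int_map_eq_smul (p : ℚ[X]) :
    ∃ (P : ℤ[X]) (c : ℤ), c ≠ 0 ∧ P.map (algebraMap ℤ ℚ) = c • p := by
  obtain ⟨c, hc, hmap⟩ := IsLocalization.integerNormalization_spec (nonZeroDivisors ℤ) p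
  exact ⟨_, c, nonZeroDivisors.ne_zero hc, hmap⟩

theorem Polynomial.exists_int_map_eq_smul₂ (p q : ℚ[X]) :
    ∃ (P Q : ℤ[X]) (c : ℤ), c ≠ 0 ∧ P.map (algebraMap ℤ ℚ) = c • p ∧
      Q.map (algebraMap ℤ ℚ) = c • q := by
  obtain ⟨P, m, hm, hP⟩ := p.exists_int_map_eq_smul
  obtain ⟨Q, n, hn, hQ⟩ := q.exists_int_map_eq_smul
  refine ⟨n • P, m • Q, m * n, mul_ne_zero hm hn, ?_, ?_⟩
  · rw [Polynomial.map_smul, hP, algebraMap_smul, smul_smul, mul_comm]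
  · rw [Polynomial.map_smul, hQ, algebraMap_smul, smul_smul]

theorem Liouville.of_forall_approx {ξ y C K δ : ℝ} (d : ℕ) (hξ : Liouville ξ)
    (hy : Irrational y) (hδ : 0 < δ)
    (h : ∀ a b : ℤ, 1 < b → |ξ - a / b| < δ →
      ∃ p q : ℤ, 1 < q ∧ (q : ℝ) ≤ K * b ^ d ∧ |y - p / q| ≤ C * |ξ - a / b|) :
    Liouville y := by
  intro n
  -- In the exponent d * n + j, the part d * n absorbs q ^ n ≤ (K b ^ d) ^ n, and
  -- b ^ j ≥ 2 ^ j absorbs both C K ^ n and δ⁻¹.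
  obtain ⟨j, hj⟩ := pow_unbounded_of_one_lt (max (C * K ^ n) δ⁻¹) one_lt_two
  obtain ⟨a, b, hb, -, hab⟩ := hξ (d * n + j)
  have hb1 : (1 : ℝ) ≤ b := by exact_mod_cast hb.le
  have hbj : (2 : ℝ) ^ j ≤ (b : ℝ) ^ j := pow_le_pow_left₀ zero_le_two (by exact_mod_cast hb) j
  have hbdn : (1 : ℝ) ≤ ((b : ℝ) ^ d) ^ n := one_le_pow₀ (one_le_pow₀ hb1)
  have hbk : (b : ℝ) ^ (d * n + j) = ((b : ℝ) ^ d) ^ n * b ^ j := by ring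
  have hδ' : 1 / (b : ℝ) ^ (d * n + j) ≤ δ := by
    have hδj : 1 < δ * 2 ^ j := (inv_lt_iff_one_lt_mul₀' hδ).1 ((le_max_right _ _).trans_lt hj)
    rw [div_le_iff₀ (by positivity), hbk]
    calc (1 : ℝ) ≤ δ * 2 ^ j := hδj.le
      _ ≤ δ * (((b : ℝ) ^ d) ^ n * b ^ j) := by
        gcongr; exact hbj.trans (le_mul_of_one_le_left (by positivity) hbdn)
  obtain ⟨p, q, hq, hqK, hpq⟩ := h a b hb (hab.trans_le hδ')
  have hne : y ≠ p / q := by exact_mod_cast hy.ne_rat (p / q)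
  have hC : 0 < C := pos_of_mul_pos_left ((abs_sub_pos.2 hne).trans_le hpq) (abs_nonneg _)
  refine ⟨p, q, hq, hne, ?_⟩
  have hq0 : (0 : ℝ) < q := by exact_mod_cast zero_lt_one.trans hq
  calc |y - p / q| ≤ C * |ξ - a / b| := hpq
    _ < C * (1 / (b : ℝ) ^ (d * n + j)) := mul_lt_mul_of_pos_left hab hC
    _ ≤ 1 / (q : ℝ) ^ n := by
      rw [mul_one_div, div_le_div_iff₀ (by positivity) (by positivity), one_mul, hbk]
      calc C * (q : ℝ) ^ n ≤ C * (K ^ n * ((b : ℝ) ^ d) ^ n) := by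
            rw [← mul_pow]; gcongr
        _ ≤ 2 ^ j * ((b : ℝ) ^ d) ^ n := by
            rw [← mul_assoc]; gcongr; exact (le_max_left _ _).trans hj.le
        _ ≤ ((b : ℝ) ^ d) ^ n * b ^ j := by rw [mul_comm]; gcongr

theorem Liouville.aeval_div_aeval {ξ : ℝ} (hξ : Liouville ξ) (P Q : ℤ[X])
    (hQ : aeval ξ Q ≠ 0) (hirr : Irrational (aeval ξ P / aeval ξ Q)) :
    Liouville (aeval ξ P / aeval ξ Q) := by
  have hf : DifferentiableAt ℝ (fun t => aeval t P / aeval t Q) ξ :=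
    P.differentiableAt_aeval.div Q.differentiableAt_aeval hQ
  obtain ⟨C, hC⟩ := hf.isBigO_sub.bound
  have hQ_ne : ∀ᶠ t in 𝓝 ξ, aeval t Q ≠ 0 := Q.continuous_aeval.continuousAt.eventually_ne hQ
  have hQ_lt : ∀ᶠ t in 𝓝 ξ, |aeval t Q| < 2 * |aeval ξ Q| :=
    (Q.continuous_aeval.abs.tendsto ξ).eventually_lt_const (lt_two_mul_self (abs_pos.2 hQ))
  obtain ⟨δ, hδ, hnear⟩ := Metric.eventually_nhds_iff.1 (hC.and (hQ_ne.and hQ_lt))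
  set d := max P.natDegree Q.natDegree
  refine hξ.of_forall_approx (C := C) (K := 4 * |aeval ξ Q|) d hirr hδ fun a b hb hab => ?_
  have hbZ : b ≠ 0 := (zero_lt_one.trans hb).ne'
  have hb0 : (0 : ℝ) < b := by exact_mod_cast zero_lt_one.trans hb
  obtain ⟨hlip, hQab, hQab_lt⟩ := hnear (by rwa [Real.dist_eq, abs_sub_comm])
  obtain ⟨Dp, hDp⟩ := P.exists_int_eq_pow_mul_aeval_div (K := ℝ) (le_max_left _ Q.natDegree) a hbZ
  obtain ⟨Dq, hDq⟩ := Q.exists_int_eq_pow_mul_aeval_div (K := ℝ) (le_max_right P.natDegree _) a hbZ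
  have hDq0 : Dq ≠ 0 := by
    rintro rfl
    exact mul_ne_zero (pow_pos hb0 d).ne' hQab (by exact_mod_cast hDq.symm)
  obtain ⟨p, q, hq, hqDq, hpq⟩ := Int.exists_one_lt_div_eq (K := ℝ) Dp hDq0
  refine ⟨p, q, hq, ?_, ?_⟩
  · have hDq_abs : |(Dq : ℝ)| = b ^ d * |aeval (a / b : ℝ) Q| := by
      rw [hDq, abs_mul, abs_of_pos (pow_pos hb0 d)]
    calc (q : ℝ) ≤ 2 * |(Dq : ℝ)| := by exact_mod_cast hqDq
      _ ≤ 4 * |aeval ξ Q| * b ^ d := by rw [hDq_abs]; nlinarith [pow_pos hb0 d]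
  · have hval : (p / q : ℝ) = aeval (a / b : ℝ) P / aeval (a / b : ℝ) Q := by
      rw [hpq, hDp, hDq, mul_div_mul_left _ _ (pow_pos hb0 d).ne']
    rw [hval, abs_sub_comm, abs_sub_comm ξ]
    simpa only [Real.norm_eq_abs] using hlip

/-- If R ∈ ℚ(X) and ξ is Liouville with R defined at ξ, then R(ξ) is rational or Liouville. -/
theorem ratFunc_eval_liouville (R : RatFunc ℚ) (ξ : ℝ) (hξ : Liouville ξ)
    (hdef : Polynomial.aeval ξ R.denom ≠ 0) :
    (∃ r : ℚ, RatFunc.eval (algebraMap ℚ ℝ) ξ R = (r : ℝ)) ∨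
      Liouville (RatFunc.eval (algebraMap ℚ ℝ) ξ R) := by
  by_cases hrat : ∃ r : ℚ, RatFunc.eval (algebraMap ℚ ℝ) ξ R = (r : ℝ)
  · exact Or.inl hrat
  right
  obtain ⟨P, Q, c, hc, hP, hQ⟩ := exists_int_map_eq_smul₂ R.num R.denom
  have haeval : ∀ (S : ℤ[X]) (s : ℚ[X]), S.map (algebraMap ℤ ℚ) = c • s →
      aeval ξ S = c * aeval ξ s := fun S s hS => by
    rw [← aeval_map_algebraMap ℚ, hS, map_zsmul, zsmul_eq_mul]
  have hc' : (c : ℝ) ≠ 0 := Int.cast_ne_zero.2 hc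
  have hQξ : aeval ξ Q ≠ 0 := by rw [haeval Q _ hQ]; exact mul_ne_zero hc' hdef
  have hR : RatFunc.eval (algebraMap ℚ ℝ) ξ R = aeval ξ P / aeval ξ Q := by
    rw [haeval P _ hP, haeval Q _ hQ, mul_div_mul_left _ _ hc', RatFunc.eval, aeval_def,
      aeval_def]
  rw [hR] at hrat ⊢
  exact hξ.aeval_div_aeval P Q hQξ fun ⟨r, hr⟩ => hrat ⟨r, hr.symm⟩
end

section
/- Let ξ be real, n a positive integer, and q, q' positive integers. Suppose there exist integers p, p' with p/q ≠ p'/q', |qξ − p| ≤ q^{-(u+1)} and |q'ξ − p'| ≤ (q')^{-(u+2)}, where u ≥ 1 is a real number and q' ≥ 2 if u > 1. Then either q' ≥ q^u or q ≥ (q')^u. -/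
/-!
Suppose both `q' < q ^ u` and `q < q' ^ u`. Since `p / q ≠ p' / q'`, the integer `p' q - p q'` is
nonzero, while writing it as `q' (q ξ - p) - q (q' ξ - p')` bounds it by
`q' q ^ (-(u + 1)) + q q' ^ (-(u + 2)) < q⁻¹ + q' ^ (-2)`.
The two assumed inequalities force `q, q' ≥ 2`, so this is less than `1/2 + 1/4 < 1`, a contradiction.
-/

open Real

lemma one_le_abs_mul_sub_mul_of_div_ne {p p' : ℤ} {q q' : ℕ} (hq : 0 < q) (hq' : 0 < q')
    (hne : (p : ℝ) / q ≠ (p' : ℝ) / q') :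
    1 ≤ |(p' : ℝ) * q - p * q'| := by
  have hne' : p' * (q : ℤ) - p * q' ≠ 0 := by
    intro h
    apply hne
    rw [div_eq_div_iff (by positivity) (by positivity)]
    exact_mod_cast (sub_eq_zero.mp h).symm
  exact_mod_cast Int.one_le_abs hne'

lemma abs_mul_sub_mul_le {R : Type*} [Field R] [LinearOrder R] [IsStrictOrderedRing R]
    {q q' : R} (hq : 0 ≤ q) (hq' : 0 ≤ q') (ξ p p' : R) :
    |p' * q - p * q'| ≤ q' * |q * ξ - p| + q * |q' * ξ - p'| := by
  calc |p' * q - p * q'| = |q' * (q * ξ - p) - q * (q' * ξ - p')| := by ring_nf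
    _ ≤ |q' * (q * ξ - p)| + |q * (q' * ξ - p')| := abs_sub _ _
    _ = q' * |q * ξ - p| + q * |q' * ξ - p'| := by
      rw [abs_mul, abs_mul, abs_of_nonneg hq, abs_of_nonneg hq']

lemma mul_rpow_neg_add_lt {x y u : ℝ} (hx : 0 < x) (hy : y < x ^ u) (k : ℝ) :
    y * x ^ (-(u + k)) < x ^ (-k) := by
  calc y * x ^ (-(u + k)) < x ^ u * x ^ (-(u + k)) := by gcongr
    _ = x ^ (-k) := by rw [← rpow_add hx]; ring_nf

lemma one_lt_of_lt_rpow {x y u : ℝ} (hx : 0 ≤ x) (hu : 0 ≤ u) (hy : 1 ≤ y) (hyx : y < x ^ u) :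
    1 < x := by
  by_contra! hx1
  linarith [rpow_le_one hx hx1 hu]

lemma two_le_of_lt_rpow {n m : ℕ} {u : ℝ} (hu : 0 ≤ u) (hm : 0 < m) (hmn : (m : ℝ) < n ^ u) :
    (2 : ℝ) ≤ n := by
  have : 1 < n := by
    exact_mod_cast one_lt_of_lt_rpow n.cast_nonneg hu (by exact_mod_cast hm) hmn
  exact_mod_cast this

theorem gap_lemma_general (ξ : ℝ) (u : ℝ) (hu : 1 ≤ u) (q q' : ℕ) (hq : 0 < q) (hq' : 0 < q')
    (p p' : ℤ)
    (hne : (p : ℝ) / q ≠ (p' : ℝ) / q')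
    (h1 : |(q : ℝ) * ξ - p| ≤ (q : ℝ) ^ (-(u + 1)))
    (h2 : |(q' : ℝ) * ξ - p'| ≤ (q' : ℝ) ^ (-(u + 2))) :
    (q : ℝ) ^ u ≤ (q' : ℝ) ∨ (q' : ℝ) ^ u ≤ (q : ℝ) := by
  by_contra! ⟨hq'_lt, hq_lt⟩
  have hu0 : 0 ≤ u := by linarith
  have hq2 := two_le_of_lt_rpow hu0 hq' hq'_lt
  have hq'2 := two_le_of_lt_rpow hu0 hq hq_lt
  have hsum : (1 : ℝ) < 2 ^ (-1 : ℝ) + 2 ^ (-2 : ℝ) := by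
    calc (1 : ℝ) ≤ |(p' : ℝ) * q - p * q'| := one_le_abs_mul_sub_mul_of_div_ne hq hq' hne
      _ ≤ q' * |(q : ℝ) * ξ - p| + q * |(q' : ℝ) * ξ - p'| :=
        abs_mul_sub_mul_le q.cast_nonneg q'.cast_nonneg ξ p p'
      _ ≤ q' * (q : ℝ) ^ (-(u + 1)) + q * (q' : ℝ) ^ (-(u + 2)) := by gcongr
      _ < (q : ℝ) ^ (-1 : ℝ) + (q' : ℝ) ^ (-2 : ℝ) :=
        add_lt_add (mul_rpow_neg_add_lt (by positivity) hq'_lt 1)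
          (mul_rpow_neg_add_lt (by positivity) hq_lt 2)
      _ ≤ 2 ^ (-1 : ℝ) + 2 ^ (-2 : ℝ) :=
        add_le_add (rpow_le_rpow_of_nonpos two_pos hq2 (by norm_num))
          (rpow_le_rpow_of_nonpos two_pos hq'2 (by norm_num))
  norm_num at hsum

/-- Gap lemma between two good rational approximations of different quality exponents. -/
theorem gap_lemma (ξ : ℝ) (u : ℝ) (hu : 1 ≤ u) (q q' : ℕ) (hq : 0 < q) (hq' : 0 < q')
    (hq'2 : 1 < u → 2 ≤ q') (p p' : ℤ)
    (hne : (p : ℝ) / q ≠ (p' : ℝ) / q')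
    (h1 : |(q : ℝ) * ξ - p| ≤ (q : ℝ) ^ (-(u + 1)))
    (h2 : |(q' : ℝ) * ξ - p'| ≤ (q' : ℝ) ^ (-(u + 2))) :
    (q : ℝ) ^ u ≤ (q' : ℝ) ∨ (q' : ℝ) ^ u ≤ (q : ℝ) :=
  gap_lemma_general ξ u hu q q' hq hq' p p' hne h1 h2
end

section
/- Let q = (q_n) be an increasing sequence of positive integers and u = (u_n) an increasing sequence of positive reals with u_{n+1} ≥ u_n + 1. If limsup_{n→∞} (log q_{n+1})/(u_n log q_n) > 0, then S_{q,u} has the cardinality of the continuum. -/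
open Filter

/-!
For exponents with gaps `e (k + 1) ≥ e k + k + 3`, the numbers `ξ_t = ∑ d_j / 2 ^ e j` with digits
`d_j ∈ {1, 2}` chosen by `t : ℕ → Bool` are pairwise distinct and irrational, and
`‖2 ^ e k * ξ_t‖ ≤ 4 * 2 ^ e k / 2 ^ e (k + 1)`. The limsup hypothesis gives `c > 0` and infinitely
many `m` with `q (m + 1) ≥ q m ^ (2 c u m)`. Along a sparse subsequence `φ` of such `m` take
`2 ^ e k ≈ q (φ k + 1)`: for `φ k < n ≤ φ (k + 1)` the denominator `b n = 2 ^ e k` is at most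
`q n ^ 2`, while `‖b n * ξ_t‖ ≤ q n ^ (-c u n)` because `2 ^ e (k + 1)` exceeds
`(q m ^ (c u m)) ^ 2` at `m = φ (k + 1)`. So the continuum many `ξ_t` all lie in `S_{q,u}`.
-/
theorem irrational_of_forall_exists_int_sub_pos_lt {ξ : ℝ}
    (h : ∀ ε > 0, ∃ m A : ℤ, 0 < m * ξ - A ∧ m * ξ - A < ε) : Irrational ξ := by
  rintro ⟨v, rfl⟩
  obtain ⟨m, A, hpos, hlt⟩ := h (1 / v.den) (by positivity)
  have hN : ((m * v.num - A * v.den : ℤ) : ℝ) = (m * v - A) * v.den := by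
    push_cast; rw [Rat.cast_def]; field_simp
  have hN1 : (1 : ℝ) ≤ (m * v - A) * v.den := by
    have hN0 : (0 : ℝ) < ((m * v.num - A * v.den : ℤ) : ℝ) := by rw [hN]; positivity
    rw [← hN]; exact_mod_cast Int.cast_pos.mp hN0
  have := (lt_div_iff₀ (by positivity)).mp hlt
  linarith

theorem rpow_sq_le_of_lt_log_div {x y s c : ℝ} (hx : 1 < x) (hy : 0 < y) (hs : 0 < s)
    (h : 2 * c < Real.log y / (s * Real.log x)) : (x ^ (c * s)) ^ 2 ≤ y := by
  have hlogx := Real.log_pos hx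
  have hx0 : 0 < x := by linarith
  rw [← Real.rpow_natCast, ← Real.rpow_mul hx0.le, ← Real.log_le_log_iff (by positivity) hy,
    Real.log_rpow hx0]
  have := (lt_div_iff₀ (by positivity)).mp h
  push_cast
  linarith

theorem two_pow_mul_le_rpow {x s : ℝ} (j : ℕ) (hx : 2 ≤ x) (hs : j + 1 ≤ s) :
    2 ^ j * x ≤ x ^ s :=
  calc 2 ^ j * x ≤ x ^ j * x := by gcongr
    _ = x ^ ((j + 1 : ℕ) : ℝ) := by rw [Real.rpow_natCast, pow_succ]
    _ ≤ x ^ s := Real.rpow_le_rpow_of_exponent_le (by linarith) (by push_cast; exact hs)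

theorem rpow_mul_le_rpow_mul_of_le {q : ℕ → ℕ} {u : ℕ → ℝ} {c : ℝ} (hq : Monotone q)
    (hu : Monotone u) (hc : 0 ≤ c) {m n : ℕ} (hq1 : 1 ≤ q m) (hu0 : 0 ≤ u m) (hmn : m ≤ n) :
    (q m : ℝ) ^ (c * u m) ≤ (q n : ℝ) ^ (c * u n) :=
  calc (q m : ℝ) ^ (c * u m) ≤ (q n : ℝ) ^ (c * u m) :=
        Real.rpow_le_rpow (by positivity) (by exact_mod_cast hq hmn) (by positivity)
    _ ≤ (q n : ℝ) ^ (c * u n) :=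
        Real.rpow_le_rpow_of_exponent_le (by exact_mod_cast hq1.trans (hq hmn))
          (by gcongr; exact hu hmn)

theorem tendsto_atTop_of_add_one_le {u : ℕ → ℝ} (h : ∀ n, u n + 1 ≤ u (n + 1)) :
    Tendsto u atTop atTop := by
  have hlin : ∀ n : ℕ, u 0 + n ≤ u n := by
    intro n
    induction n with
    | zero => simp
    | succ n ih => push_cast; linarith [h n]
  exact tendsto_atTop_mono hlin (tendsto_atTop_add_const_left _ _ tendsto_natCast_atTop_atTop)

theorem StrictMono.exists_lt_le_succ {φ : ℕ → ℕ} (hφ : StrictMono φ) {n : ℕ} (hn : φ 0 < n) :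
    ∃ k, φ k < n ∧ n ≤ φ (k + 1) := by
  classical
  have hex : ∃ k, n ≤ φ (k + 1) := ⟨n, (Nat.le_succ n).trans (hφ.id_le (n + 1))⟩
  refine ⟨Nat.find hex, ?_, Nat.find_spec hex⟩
  rcases h : Nat.find hex with _ | k
  · exact hn
  · exact not_le.mp (Nat.find_min hex (h ▸ k.lt_succ_self))

theorem mem_LSet_of_blocks {q : ℕ → ℕ} {u : ℕ → ℝ} {ξ κ₁ κ₂ : ℝ} {φ B : ℕ → ℕ}
    (hξ : Irrational ξ) (hκ₁ : 0 < κ₁) (hκ₂ : 0 < κ₂) (hφ : StrictMono φ)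
    (hB : ∀ k n, φ k < n → n ≤ φ (k + 1) → 1 ≤ B k ∧ (B k : ℝ) ≤ (q n : ℝ) ^ κ₁ ∧
      distNearestInt (B k * ξ) ≤ (q n : ℝ) ^ (-(κ₂ * u n))) :
    ξ ∈ LSet q u := by
  have hblock : ∀ n, ∃ k, φ 0 < n → φ k < n ∧ n ≤ φ (k + 1) := fun n ↦
    if hn : φ 0 < n then (hφ.exists_lt_le_succ hn).imp fun _ h _ ↦ h
    else ⟨0, fun h ↦ (hn h).elim⟩
  choose κ hκ using hblock
  refine ⟨hξ, κ₁, κ₂, hκ₁, hκ₂, B ∘ κ, ?_⟩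
  filter_upwards [eventually_gt_atTop (φ 0)] with n hn
  exact hB _ n (hκ n hn).1 (hκ n hn).2

def lacunaryDigit (t : ℕ → Bool) (j : ℕ) : ℕ := if t j then 2 else 1

noncomputable def lacunarySeries (e : ℕ → ℕ) (t : ℕ → Bool) : ℝ :=
  ∑' j, (lacunaryDigit t j : ℝ) / 2 ^ e j

noncomputable def lacunaryTail (e : ℕ → ℕ) (t : ℕ → Bool) (k : ℕ) : ℝ :=
  ∑' j, (lacunaryDigit t (j + k) : ℝ) / 2 ^ e (j + k)

section LacunarySeries

variable {e : ℕ → ℕ} (t : ℕ → Bool)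

lemma one_le_lacunaryDigit (j : ℕ) : (1 : ℝ) ≤ lacunaryDigit t j := by
  unfold lacunaryDigit; split <;> norm_num

lemma lacunaryDigit_le_two (j : ℕ) : (lacunaryDigit t j : ℝ) ≤ 2 := by
  unfold lacunaryDigit; split <;> norm_num

lemma lacunaryTerm_le (he : StrictMono e) (k j : ℕ) :
    (lacunaryDigit t (j + k) : ℝ) / 2 ^ e (j + k) ≤ 2 / 2 ^ e k * (1 / 2) ^ j := by
  have hpow : (2 : ℝ) ^ (e k + j) ≤ 2 ^ e (j + k) :=
    pow_le_pow_right₀ one_le_two (by linarith [he.add_le_nat j k])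
  calc (lacunaryDigit t (j + k) : ℝ) / 2 ^ e (j + k) ≤ 2 / 2 ^ (e k + j) :=
        div_le_div₀ zero_le_two (lacunaryDigit_le_two t _) (by positivity) hpow
    _ = 2 / 2 ^ e k * (1 / 2) ^ j := by rw [pow_add, one_div_pow]; field_simp

lemma summable_lacunaryTerm (he : StrictMono e) (k : ℕ) :
    Summable fun j ↦ (lacunaryDigit t (j + k) : ℝ) / 2 ^ e (j + k) :=
  .of_nonneg_of_le (fun _ ↦ by positivity) (lacunaryTerm_le t he k)
    (summable_geometric_two.mul_left _)

lemma lacunaryTail_le (he : StrictMono e) (k : ℕ) : lacunaryTail e t k ≤ 4 / 2 ^ e k := by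
  calc lacunaryTail e t k ≤ ∑' j : ℕ, 2 / 2 ^ e k * (1 / 2) ^ j :=
        (summable_lacunaryTerm t he k).tsum_le_tsum (lacunaryTerm_le t he k)
          (summable_geometric_two.mul_left _)
    _ = 4 / 2 ^ e k := by rw [tsum_mul_left, tsum_geometric_two]; ring

lemma lacunaryTail_pos (he : StrictMono e) (k : ℕ) : 0 < lacunaryTail e t k :=
  (summable_lacunaryTerm t he k).tsum_pos (fun _ ↦ by positivity) 0
    (div_pos (by linarith [one_le_lacunaryDigit t (0 + k)]) (by positivity))

lemma lacunaryTail_eq_add (he : StrictMono e) (k : ℕ) :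
    lacunaryTail e t k = lacunaryDigit t k / 2 ^ e k + lacunaryTail e t (k + 1) := by
  rw [lacunaryTail, (summable_lacunaryTerm t he k).tsum_eq_zero_add, lacunaryTail, zero_add]
  simp only [add_assoc, add_comm 1 k]

lemma lacunarySeries_eq_sum_add_lacunaryTail (he : StrictMono e) (k : ℕ) :
    lacunarySeries e t =
      ∑ j ∈ Finset.range k, (lacunaryDigit t j : ℝ) / 2 ^ e j + lacunaryTail e t k :=
  ((summable_lacunaryTerm t he 0).sum_add_tsum_nat_add k).symm

lemma exists_int_two_pow_mul_lacunarySeries_sub (he : StrictMono e) (k : ℕ) :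
    ∃ A : ℤ, 2 ^ e k * lacunarySeries e t - A = 2 ^ e k * lacunaryTail e t (k + 1) := by
  refine ⟨∑ j ∈ Finset.range (k + 1), (lacunaryDigit t j : ℤ) * 2 ^ (e k - e j), ?_⟩
  have hsum : ∑ j ∈ Finset.range (k + 1), 2 ^ e k * ((lacunaryDigit t j : ℝ) / 2 ^ e j) =
      ∑ j ∈ Finset.range (k + 1), (lacunaryDigit t j : ℝ) * 2 ^ (e k - e j) := by
    refine Finset.sum_congr rfl fun j hj ↦ ?_
    rw [← pow_sub_mul_pow (2 : ℝ) (he.monotone (Finset.mem_range_succ_iff.mp hj))]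
    field_simp
  rw [lacunarySeries_eq_sum_add_lacunaryTail t he (k + 1), mul_add, Finset.mul_sum, hsum]
  push_cast
  ring

lemma distNearestInt_two_pow_mul_lacunarySeries_le (he : StrictMono e) (k : ℕ) :
    distNearestInt (2 ^ e k * lacunarySeries e t) ≤ 4 * 2 ^ e k / 2 ^ e (k + 1) := by
  obtain ⟨A, hA⟩ := exists_int_two_pow_mul_lacunarySeries_sub t he k
  have hpos := lacunaryTail_pos t he (k + 1)
  calc distNearestInt (2 ^ e k * lacunarySeries e t)
      _ ≤ |2 ^ e k * lacunarySeries e t - A| := round_le _ A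
      _ = 2 ^ e k * lacunaryTail e t (k + 1) := by rw [hA, abs_of_pos (by positivity)]
      _ ≤ 2 ^ e k * (4 / 2 ^ e (k + 1)) := by gcongr; exact lacunaryTail_le t he (k + 1)
      _ = 4 * 2 ^ e k / 2 ^ e (k + 1) := by ring

lemma strictMono_of_gap (hgap : ∀ k, e k + k + 3 ≤ e (k + 1)) : StrictMono e :=
  strictMono_nat_of_lt_succ fun k ↦ by have := hgap k; omega

lemma two_pow_mul_lacunaryTail_succ_le (hgap : ∀ k, e k + k + 3 ≤ e (k + 1)) (k : ℕ) :
    2 ^ e k * lacunaryTail e t (k + 1) ≤ (1 / 2) ^ (k + 1) := by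
  have hpow : (2 : ℝ) ^ e k * 2 ^ (k + 3) ≤ 2 ^ e (k + 1) := by
    rw [← pow_add]; exact pow_le_pow_right₀ one_le_two (by have := hgap k; omega)
  calc 2 ^ e k * lacunaryTail e t (k + 1)
      _ ≤ 2 ^ e k * (4 / 2 ^ e (k + 1)) := by
        gcongr; exact lacunaryTail_le t (strictMono_of_gap hgap) (k + 1)
      _ ≤ 2 ^ e k * (4 / (2 ^ e k * 2 ^ (k + 3))) := by gcongr
      _ = (1 / 2) ^ (k + 1) := by rw [one_div_pow]; field_simp; ring

end LacunarySeries

section Gap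

variable {e : ℕ → ℕ}

theorem lacunarySeries_irrational (hgap : ∀ k, e k + k + 3 ≤ e (k + 1)) (t : ℕ → Bool) :
    Irrational (lacunarySeries e t) := by
  refine irrational_of_forall_exists_int_sub_pos_lt fun ε hε ↦ ?_
  obtain ⟨k, hk⟩ := exists_pow_lt_of_lt_one hε (by norm_num : (1 / 2 : ℝ) < 1)
  obtain ⟨A, hA⟩ := exists_int_two_pow_mul_lacunarySeries_sub t (strictMono_of_gap hgap) k
  refine ⟨2 ^ e k, A, ?_, ?_⟩ <;> push_cast <;> rw [hA]
  · have := lacunaryTail_pos t (strictMono_of_gap hgap) (k + 1)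
    positivity
  · calc 2 ^ e k * lacunaryTail e t (k + 1) ≤ (1 / 2) ^ (k + 1) :=
          two_pow_mul_lacunaryTail_succ_le t hgap k
      _ ≤ (1 / 2) ^ k := pow_le_pow_of_le_one (by norm_num) (by norm_num) k.le_succ
      _ < ε := hk

theorem lacunarySeries_lt_of_toLex_lt (hgap : ∀ k, e k + k + 3 ≤ e (k + 1)) {t t' : ℕ → Bool}
    (h : toLex t < toLex t') :
    lacunarySeries e t < lacunarySeries e t' := by
  have he := strictMono_of_gap hgap
  obtain ⟨i, hagree, hlt⟩ := h
  obtain ⟨hti, hti'⟩ : t i = false ∧ t' i = true := Bool.lt_iff.mp hlt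
  have hsum : ∑ j ∈ Finset.range i, (lacunaryDigit t j : ℝ) / 2 ^ e j =
      ∑ j ∈ Finset.range i, (lacunaryDigit t' j : ℝ) / 2 ^ e j :=
    Finset.sum_congr rfl fun j hj ↦ by
      rw [lacunaryDigit, lacunaryDigit, show t j = t' j from hagree j (Finset.mem_range.mp hj)]
  have htail : 2 ^ e i * lacunaryTail e t (i + 1) < 1 :=
    (two_pow_mul_lacunaryTail_succ_le t hgap i).trans_lt
      (pow_lt_one₀ (by norm_num) (by norm_num) (by omega))
  have htail' := lacunaryTail_pos t' he (i + 1)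
  rw [lacunarySeries_eq_sum_add_lacunaryTail _ he i, lacunarySeries_eq_sum_add_lacunaryTail _ he i,
    hsum, lacunaryTail_eq_add _ he i, lacunaryTail_eq_add _ he i]
  simp only [lacunaryDigit, hti, hti']
  have h2 : (0 : ℝ) < 2 ^ e i := by positivity
  rw [← lt_div_iff₀' h2] at htail
  push_cast
  linarith [show (2 : ℝ) / 2 ^ e i = 1 / 2 ^ e i + 1 / 2 ^ e i by ring]

theorem lacunarySeries_injective (hgap : ∀ k, e k + k + 3 ≤ e (k + 1)) :
    Function.Injective (lacunarySeries e) := by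
  have hmono : StrictMono (lacunarySeries e ∘ ofLex) :=
    fun _ _ h ↦ lacunarySeries_lt_of_toLex_lt hgap h
  exact fun t t' h ↦ toLex.injective (hmono.injective h)

end Gap

structure IsJumpSubsequence (q : ℕ → ℕ) (u : ℕ → ℝ) (c : ℝ) (φ : ℕ → ℕ) : Prop where
  strictMono : StrictMono φ
  two_le : 2 ≤ q (φ 0)
  pos : 0 < u (φ 0)
  jump : ∀ j, ((q (φ j) : ℝ) ^ (c * u (φ j))) ^ 2 ≤ q (φ j + 1)
  growth : ∀ j, 2 ^ (j + 3) * (q (φ j) : ℝ) ≤ (q (φ j) : ℝ) ^ (c * u (φ j))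

def blockExponent (q φ : ℕ → ℕ) (k : ℕ) : ℕ := Nat.log 2 (q (φ k + 1)) + 1

section Construction

variable {q : ℕ → ℕ} {u : ℕ → ℝ} {c : ℝ} {φ : ℕ → ℕ}

lemma lt_two_pow_blockExponent (k : ℕ) : (q (φ k + 1) : ℝ) < 2 ^ blockExponent q φ k := by
  exact_mod_cast Nat.lt_pow_succ_log_self one_lt_two _

lemma two_pow_blockExponent_le {k : ℕ} (hk : q (φ k + 1) ≠ 0) :
    (2 : ℝ) ^ blockExponent q φ k ≤ 2 * q (φ k + 1) := by
  rw [blockExponent, pow_succ, mul_comm]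
  gcongr
  exact_mod_cast Nat.pow_log_le_self 2 hk

namespace IsJumpSubsequence

lemma two_le_of_le (hq : Monotone q) (hφ : IsJumpSubsequence q u c φ) {n : ℕ} (hn : φ 0 ≤ n) :
    2 ≤ q n :=
  hφ.two_le.trans (hq hn)

lemma two_pow_mul_two_pow_blockExponent_le (hq : Monotone q) (hφ : IsJumpSubsequence q u c φ)
    (k : ℕ) :
    2 ^ (k + 3) * 2 ^ blockExponent q φ k ≤ (q (φ (k + 1)) : ℝ) ^ (c * u (φ (k + 1))) := by
  have hlt : φ k + 1 ≤ φ (k + 1) := hφ.strictMono k.lt_succ_self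
  have hq2 : 2 ≤ q (φ k + 1) :=
    hφ.two_le_of_le hq ((hφ.strictMono.monotone k.zero_le).trans (by omega))
  calc 2 ^ (k + 3) * 2 ^ blockExponent q φ k ≤ (2 : ℝ) ^ (k + 3) * (2 * q (φ (k + 1))) := by
        gcongr
        exact (two_pow_blockExponent_le (by omega)).trans (by gcongr; exact_mod_cast hq hlt)
    _ = 2 ^ (k + 1 + 3) * q (φ (k + 1)) := by ring
    _ ≤ _ := hφ.growth (k + 1)

lemma blockExponent_gap (hq : Monotone q) (hφ : IsJumpSubsequence q u c φ) (k : ℕ) :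
    blockExponent q φ k + k + 3 ≤ blockExponent q φ (k + 1) := by
  set X := (q (φ (k + 1)) : ℝ) ^ (c * u (φ (k + 1)))
  have hX := hφ.two_pow_mul_two_pow_blockExponent_le hq k
  have hX1 : 1 ≤ X := le_trans (one_le_mul_of_one_le_of_one_le (one_le_pow₀ one_le_two)
    (one_le_pow₀ one_le_two)) hX
  have : (2 : ℝ) ^ (blockExponent q φ k + k + 3) < 2 ^ blockExponent q φ (k + 1) :=
    calc (2 : ℝ) ^ (blockExponent q φ k + k + 3) ≤ X := by
          rw [add_assoc, pow_add, mul_comm]; exact hX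
      _ ≤ X ^ 2 := by nlinarith
      _ < _ := (hφ.jump (k + 1)).trans_lt (lt_two_pow_blockExponent (k + 1))
  exact ((pow_lt_pow_iff_right₀ one_lt_two).mp this).le

lemma two_pow_blockExponent_le_rpow_two (hq : Monotone q) (hφ : IsJumpSubsequence q u c φ)
    {k n : ℕ} (hkn : φ k < n) : (2 : ℝ) ^ blockExponent q φ k ≤ (q n : ℝ) ^ (2 : ℝ) := by
  have hq2 : 2 ≤ q (φ k + 1) :=
    hφ.two_le_of_le hq ((hφ.strictMono.monotone k.zero_le).trans (by omega))
  have hqn : q (φ k + 1) ≤ q n := hq hkn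
  calc (2 : ℝ) ^ blockExponent q φ k ≤ 2 * q (φ k + 1) := two_pow_blockExponent_le (by omega)
    _ ≤ q n * q n := by gcongr; exact_mod_cast (by omega)
    _ = q n ^ (2 : ℝ) := by rw [Real.rpow_two, sq]

lemma distNearestInt_two_pow_mul_le_rpow (hq : Monotone q) (hu : Monotone u) (hc : 0 < c)
    (hφ : IsJumpSubsequence q u c φ) (t : ℕ → Bool) {k n : ℕ} (hkn : φ k < n)
    (hnk : n ≤ φ (k + 1)) :
    distNearestInt (2 ^ blockExponent q φ k * lacunarySeries (blockExponent q φ) t) ≤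
      (q n : ℝ) ^ (-(c * u n)) := by
  set e := blockExponent q φ
  set X := (q (φ (k + 1)) : ℝ) ^ (c * u (φ (k + 1)))
  have hn0 : φ 0 ≤ n := (hφ.strictMono.monotone k.zero_le).trans hkn.le
  have hqn : (2 : ℝ) ≤ q n := by exact_mod_cast hφ.two_le_of_le hq hn0
  have h4 : (4 : ℝ) ≤ 2 ^ (k + 3) :=
    calc (4 : ℝ) = 2 ^ 2 := by norm_num
      _ ≤ 2 ^ (k + 3) := pow_le_pow_right₀ one_le_two (by omega)
  have hX : 4 * 2 ^ e k ≤ X :=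
    (mul_le_mul_of_nonneg_right h4 (by positivity)).trans
      (hφ.two_pow_mul_two_pow_blockExponent_le hq k)
  have hXsq : X ^ 2 < 2 ^ e (k + 1) :=
    (hφ.jump (k + 1)).trans_lt (lt_two_pow_blockExponent (k + 1))
  have hXn : (q n : ℝ) ^ (c * u n) ≤ X :=
    rpow_mul_le_rpow_mul_of_le hq hu hc.le (by exact_mod_cast one_le_two.trans hqn)
      (hφ.pos.le.trans (hu hn0)) hnk
  have hXn0 : 0 < (q n : ℝ) ^ (c * u n) := by positivity
  calc distNearestInt (2 ^ e k * lacunarySeries e t)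
      _ ≤ 4 * 2 ^ e k / 2 ^ e (k + 1) :=
        distNearestInt_two_pow_mul_lacunarySeries_le t
          (strictMono_of_gap (hφ.blockExponent_gap hq)) k
      _ ≤ X / X ^ 2 := div_le_div₀ (hXn0.le.trans hXn) hX (pow_pos (hXn0.trans_le hXn) 2) hXsq.le
      _ = X⁻¹ := by field_simp
      _ ≤ ((q n : ℝ) ^ (c * u n))⁻¹ := inv_anti₀ hXn0 hXn
      _ = (q n : ℝ) ^ (-(c * u n)) := (Real.rpow_neg (by positivity) _).symm

theorem lacunarySeries_blockExponent_mem_LSet (hq : Monotone q) (hu : Monotone u) (hc : 0 < c)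
    (hφ : IsJumpSubsequence q u c φ) (t : ℕ → Bool) :
    lacunarySeries (blockExponent q φ) t ∈ LSet q u :=
  mem_LSet_of_blocks (B := fun k ↦ 2 ^ blockExponent q φ k)
    (lacunarySeries_irrational (hφ.blockExponent_gap hq) t) two_pos hc hφ.strictMono
    fun _ _ hkn hnk ↦ ⟨Nat.one_le_two_pow,
      by exact_mod_cast hφ.two_pow_blockExponent_le_rpow_two hq hkn,
      by exact_mod_cast hφ.distNearestInt_two_pow_mul_le_rpow hq hu hc t hkn hnk⟩

end IsJumpSubsequence

end Construction

theorem exists_isJumpSubsequence {q : ℕ → ℕ} {u : ℕ → ℝ} (hq : StrictMono q)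
    (hu : Tendsto u atTop atTop)
    (hlim : 0 < limsup (fun n ↦ Real.log (q (n + 1)) / (u n * Real.log (q n))) atTop) :
    ∃ c > 0, ∃ φ, IsJumpSubsequence q u c φ := by
  set f := fun n ↦ Real.log (q (n + 1)) / (u n * Real.log (q n))
  have hcob : IsCoboundedUnder (· ≤ ·) atTop f := by
    by_contra h
    rw [Real.limsup_of_not_isCoboundedUnder h] at hlim
    exact hlim.false
  obtain ⟨c, hc, hfreq⟩ : ∃ c > 0, ∃ᶠ m in atTop, 2 * c < f m :=
    ⟨limsup f atTop / 4, by positivity, frequently_lt_of_lt_limsup hcob (by linarith)⟩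
  have hq2 : ∀ᶠ m in atTop, 2 ≤ q m :=
    (eventually_ge_atTop 2).mono fun m hm ↦ hm.trans (hq.id_le m)
  have hgood : ∀ j, ∃ᶠ m in atTop, 2 ≤ q m ∧ 0 < u m ∧
      ((q m : ℝ) ^ (c * u m)) ^ 2 ≤ q (m + 1) ∧
      2 ^ (j + 3) * (q m : ℝ) ≤ (q m : ℝ) ^ (c * u m) := by
    intro j
    refine (hfreq.and_eventually (hq2.and ((hu.eventually_gt_atTop 0).and
      ((hu.const_mul_atTop hc).eventually_ge_atTop (j + 3 + 1))))).mono ?_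
    rintro m ⟨hm, hqm, hum, hcum⟩
    have hqm' : (2 : ℝ) ≤ q m := by exact_mod_cast hqm
    have hqm1 : (0 : ℝ) < q (m + 1) :=
      Nat.cast_pos.mpr ((Nat.zero_le _).trans_lt (hq m.lt_succ_self))
    exact ⟨hqm, hum, rpow_sq_le_of_lt_log_div (by linarith) hqm1 hum hm,
      two_pow_mul_le_rpow (j + 3) hqm' (by exact_mod_cast hcum)⟩
  obtain ⟨φ, hφ, hφgood⟩ := extraction_forall_of_frequently hgood
  exact ⟨c, hc, φ, hφ, (hφgood 0).1, (hφgood 0).2.1, fun j ↦ (hφgood j).2.2.1,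
    fun j ↦ (hφgood j).2.2.2⟩

theorem LSet_continuum_of_limsup_pos_general (q : ℕ → ℕ) (u : ℕ → ℝ)
    (hq : StrictMono q) (hustep : ∀ n, u n + 1 ≤ u (n + 1))
    (hlim : 0 < Filter.limsup (fun n => Real.log (q (n + 1)) / (u n * Real.log (q n)))
      Filter.atTop) :
    Cardinal.mk (LSet q u) = Cardinal.continuum := by
  obtain ⟨c, hc, φ, hφ⟩ := exists_isJumpSubsequence hq (tendsto_atTop_of_add_one_le hustep) hlim
  have hu : Monotone u := monotone_nat_of_le_succ fun n ↦ by linarith [hustep n]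
  let ξ : (ℕ → Bool) → LSet q u := fun t ↦
    ⟨lacunarySeries (blockExponent q φ) t,
      hφ.lacunarySeries_blockExponent_mem_LSet hq.monotone hu hc t⟩
  have hinj : Function.Injective ξ := fun t t' h ↦
    lacunarySeries_injective (hφ.blockExponent_gap hq.monotone) (congrArg Subtype.val h)
  refine le_antisymm ((Cardinal.mk_set_le _).trans Cardinal.mk_real.le) ?_
  calc Cardinal.continuum = Cardinal.mk (ℕ → Bool) := by simp
    _ ≤ Cardinal.mk (LSet q u) := Cardinal.mk_le_of_injective hinj

/-- If limsup (log q_{n+1})/(u_n log q_n) > 0 then S_{q,u} has the power of continuum. -/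
theorem LSet_continuum_of_limsup_pos (q : ℕ → ℕ) (u : ℕ → ℝ)
    (hq : StrictMono q) (hqpos : ∀ n, 0 < q n)
    (hupos : ∀ n, 0 < u n) (hustep : ∀ n, u n + 1 ≤ u (n + 1))
    (hlim : 0 < Filter.limsup (fun n => Real.log (q (n + 1)) / (u n * Real.log (q n)))
      Filter.atTop) :
    Cardinal.mk (LSet q u) = Cardinal.continuum :=
  LSet_continuum_of_limsup_pos_general q u hq hustep hlim
end

section
/- For 0 < τ < 1 let q^{(τ)}_n = 2^{n!·⌊n^τ⌋}. Then for any 0 < τ₁ < τ₂ < 1, the sets S_{q^{(τ₁)}} and S_{q^{(τ₂)}} are disjoint, and each is nonempty. -/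
/-!
For exponents with `(n + 2) * e n ≤ e (n + 1)` the lacunary series `ξ = ∑ 2^(-e k)` has
`‖2^(e n) ξ‖ ≤ 2^(1 + e n - e (n + 1))`, which makes `ξ` a Liouville number lying in `S_q` for
`q n = 2^(e n)`; the exponents `(n + 1)! ⌊(n + 1)^τ⌋` qualify.

If `b n` witnesses `ξ ∈ S_q` and `c n` witnesses `ξ ∈ S_q'`, the integer `c p - b r`, with `p`, `r`
the integers nearest to `b ξ`, `c ξ`, has absolute value at most `b ‖c ξ‖ + c ‖b ξ‖`. When
`log q n` and `log q (n + 1)` are negligible against `u n * log q' n` and vice versa, this is `< 1`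
for the pairs `(b n, c n)` and `(c n, b (n + 1))`, so the fractions `p / b n` are eventually
constant. They tend to `ξ`, which is therefore rational. For `q^(τ)` we have
`log q n ≍ (n + 1)! (n + 1)^τ`, and the comparisons hold because `τ₁ < τ₂ < τ₁ + 1` and `τ₂ ≤ 1`.
-/

open Filter

open Asymptotics Topology

noncomputable def lacunarySum (e : ℕ → ℕ) : ℝ := ∑' k, (2⁻¹ : ℝ) ^ e k

section Lacunary

variable {e : ℕ → ℕ}

lemma summable_inv_two_pow_comp (he : StrictMono e) : Summable fun k => (2⁻¹ : ℝ) ^ e k :=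
  (summable_geometric_of_lt_one (by norm_num) (by norm_num)).of_nonneg_of_le
    (fun _ => by positivity) fun k => pow_le_pow_of_le_one (by norm_num) (by norm_num) (he.id_le k)

lemma exists_nat_partial_sum_eq_div (he : Monotone e) (n : ℕ) :
    ∃ A : ℕ, ∑ k ∈ Finset.range (n + 1), (2⁻¹ : ℝ) ^ e k = A / 2 ^ e n := by
  refine ⟨∑ k ∈ Finset.range (n + 1), 2 ^ (e n - e k), ?_⟩
  rw [eq_div_iff (by positivity), Finset.sum_mul]
  push_cast
  refine Finset.sum_congr rfl fun k hk => ?_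
  rw [pow_sub₀ _ two_ne_zero (he (Finset.mem_range_succ_iff.mp hk)), inv_pow, mul_comm]

lemma lacunarySum_sub_partial_sum_mem (he : StrictMono e) (n : ℕ) :
    lacunarySum e - ∑ k ∈ Finset.range (n + 1), (2⁻¹ : ℝ) ^ e k ∈
      Set.Ioc 0 (2 * 2⁻¹ ^ e (n + 1)) := by
  have hs := summable_inv_two_pow_comp he
  have htail := (summable_nat_add_iff (n + 1)).mpr hs
  rw [lacunarySum, ← hs.sum_add_tsum_nat_add (n + 1), add_sub_cancel_left]
  refine ⟨htail.tsum_pos (fun _ => by positivity) 0 (by positivity), ?_⟩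
  calc ∑' k, (2⁻¹ : ℝ) ^ e (k + (n + 1))
      ≤ ∑' k, (2⁻¹ : ℝ) ^ e (n + 1) * 2⁻¹ ^ k :=
        htail.tsum_le_tsum (fun k => by
          rw [← pow_add]
          exact pow_le_pow_of_le_one (by norm_num) (by norm_num) (by
            simpa [add_comm] using he.add_le_nat k (n + 1)))
          ((summable_geometric_of_lt_one (by norm_num) (by norm_num)).mul_left _)
    _ = 2 * 2⁻¹ ^ e (n + 1) := by rw [tsum_mul_left, tsum_geometric_inv_two, mul_comm]

lemma exists_dyadic_approx (he : StrictMono e) (n : ℕ) :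
    ∃ A : ℕ, lacunarySum e - A / 2 ^ e n ∈ Set.Ioc 0 (2 * 2⁻¹ ^ e (n + 1)) := by
  obtain ⟨A, hA⟩ := exists_nat_partial_sum_eq_div he.monotone n
  exact ⟨A, hA ▸ lacunarySum_sub_partial_sum_mem he n⟩

variable (he : ∀ n, 0 < e n) (hg : ∀ n, (n + 2) * e n ≤ e (n + 1))
include he hg

lemma strictMono_of_lacunary : StrictMono e :=
  strictMono_nat_of_lt_succ fun n => by nlinarith [he n, hg n]

lemma two_mul_inv_two_pow_succ_le (n : ℕ) :
    2 * (2⁻¹ : ℝ) ^ e (n + 1) ≤ 2⁻¹ ^ (e n * (n + 1)) := by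
  have hexp : e n * (n + 1) + 1 ≤ e (n + 1) := by nlinarith [he n, hg n]
  calc 2 * (2⁻¹ : ℝ) ^ e (n + 1) ≤ 2 * 2⁻¹ ^ (e n * (n + 1) + 1) := by
        gcongr 2 * ?_
        exact pow_le_pow_of_le_one (by norm_num) (by norm_num) hexp
    _ = 2⁻¹ ^ (e n * (n + 1)) := by ring

lemma liouville_lacunarySum : Liouville (lacunarySum e) := by
  intro m
  obtain ⟨A, hpos, hle⟩ := exists_dyadic_approx (strictMono_of_lacunary he hg) (m + 1)
  refine ⟨A, 2 ^ e (m + 1), one_lt_pow₀ one_lt_two (he _).ne', ?_, ?_⟩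
  · push_cast
    exact (sub_pos.mp hpos).ne'
  · push_cast
    rw [abs_of_pos hpos, one_div, ← pow_mul, ← inv_pow]
    calc _ ≤ 2 * (2⁻¹ : ℝ) ^ e (m + 1 + 1) := hle
      _ ≤ 2⁻¹ ^ (e (m + 1) * (m + 1 + 1)) := two_mul_inv_two_pow_succ_le he hg _
      _ < 2⁻¹ ^ (e (m + 1) * m) :=
        pow_lt_pow_right_of_lt_one₀ (by norm_num) (by norm_num) (by nlinarith [he (m + 1)])

lemma lacunarySum_mem_LSet : lacunarySum e ∈ LSet (fun n => 2 ^ e n) (fun n => (n : ℝ) + 1) := by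
  refine ⟨(liouville_lacunarySum he hg).irrational, 1, 1 / 2, one_pos, one_half_pos,
    fun n => 2 ^ e n, ?_⟩
  filter_upwards [eventually_ge_atTop 1] with n hn
  obtain ⟨A, hpos, hle⟩ := exists_dyadic_approx (strictMono_of_lacunary he hg) n
  have hQ : (1 : ℝ) ≤ ((2 ^ e n : ℕ) : ℝ) := by exact_mod_cast Nat.one_le_two_pow
  refine ⟨Nat.one_le_two_pow, (Real.rpow_one _).ge, ?_⟩
  calc distNearestInt (((2 ^ e n : ℕ) : ℝ) * lacunarySum e)
      ≤ |((2 ^ e n : ℕ) : ℝ) * lacunarySum e - (A : ℤ)| := round_le _ _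
    _ = 2 ^ e n * (lacunarySum e - A / 2 ^ e n) := by
        rw [← abs_of_pos (mul_pos (by positivity) hpos), mul_sub, mul_div_cancel₀ _ (by positivity)]
        push_cast; rfl
    _ ≤ 2 ^ e n * 2⁻¹ ^ (e n * (n + 1)) := by
        gcongr
        exact hle.trans (two_mul_inv_two_pow_succ_le he hg n)
    _ = ((2 ^ e n : ℕ) : ℝ) ^ (-(n : ℝ)) := by
        rw [Real.rpow_neg (by positivity), Real.rpow_natCast, mul_add_one, pow_add, mul_left_comm,
          ← mul_pow]
        push_cast
        rw [← pow_mul, inv_pow]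
        norm_num
    _ ≤ ((2 ^ e n : ℕ) : ℝ) ^ (-(1 / 2 * ((n : ℝ) + 1))) := by
        gcongr
        have : (1 : ℝ) ≤ n := by exact_mod_cast hn
        linarith

end Lacunary

section Criterion

lemma tendsto_rpow_mul_rpow_neg_nhds_zero {α : Type*} {l : Filter α} {Q Q' v : α → ℝ} {κ κ' : ℝ}
    (hQ : ∀ x, 0 < Q x) (hQ' : ∀ x, 0 < Q' x) (hκ' : 0 < κ')
    (ho : (fun x => Real.log (Q x)) =o[l] fun x => v x * Real.log (Q' x))
    (htop : Tendsto (fun x => v x * Real.log (Q' x)) l atTop) :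
    Tendsto (fun x => Q x ^ κ * Q' x ^ (-(κ' * v x))) l (𝓝 0) := by
  have hratio : Tendsto (fun x => κ * (Real.log (Q x) / (v x * Real.log (Q' x))) - κ') l
      (𝓝 (-κ')) := by
    simpa using (ho.tendsto_div_nhds_zero.const_mul κ).sub_const κ'
  have hexp : Tendsto (fun x => κ * Real.log (Q x) - κ' * (v x * Real.log (Q' x))) l atBot := by
    refine (htop.atTop_mul_neg (neg_lt_zero.mpr hκ') hratio).congr' ?_
    filter_upwards [htop.eventually_gt_atTop 0] with x hx
    generalize v x * Real.log (Q' x) = g at hx ⊢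
    field_simp
  refine (Real.tendsto_exp_atBot.comp hexp).congr fun x => ?_
  rw [Function.comp_apply, Real.rpow_def_of_pos (hQ x), Real.rpow_def_of_pos (hQ' x),
    ← Real.exp_add]
  ring_nf

lemma eventually_mul_lt_of_le_rpow {B D : ℕ → ℝ} {Q Q' : ℕ → ℕ} {v : ℕ → ℝ} {κ κ' ε : ℝ}
    (hQ : ∀ n, 0 < Q n) (hQ' : ∀ n, 0 < Q' n) (hκ' : 0 < κ') (hε : 0 < ε)
    (ho : (fun n => Real.log (Q n)) =o[atTop] fun n => v n * Real.log (Q' n))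
    (htop : Tendsto (fun n => v n * Real.log (Q' n)) atTop atTop)
    (hB : ∀ᶠ n in atTop, B n ≤ (Q n : ℝ) ^ κ)
    (hD₀ : ∀ n, 0 ≤ D n) (hD : ∀ᶠ n in atTop, D n ≤ (Q' n : ℝ) ^ (-(κ' * v n))) :
    ∀ᶠ n in atTop, B n * D n < ε := by
  have hlim := tendsto_rpow_mul_rpow_neg_nhds_zero (fun n => Nat.cast_pos.mpr (hQ n))
    (fun n => Nat.cast_pos.mpr (hQ' n)) hκ' ho htop (κ := κ)
  filter_upwards [hlim.eventually_lt_const hε, hB, hD] with n hlt hBn hDn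
  exact (mul_le_mul hBn hDn (hD₀ n) (by positivity)).trans_lt hlt

lemma round_div_eq_round_div {b c : ℕ} (hb : 0 < b) (hc : 0 < c) {x : ℝ}
    (h : b * distNearestInt (c * x) + c * distNearestInt (b * x) < 1) :
    (round (b * x) : ℝ) / b = round (c * x) / c := by
  have hint : (c : ℤ) * round (b * x) - b * round (c * x) = 0 := by
    rw [← Int.abs_lt_one_iff, ← Int.cast_lt (R := ℝ)]
    push_cast
    calc |(c : ℝ) * round (b * x) - b * round (c * x)|
        = |b * (c * x - round (c * x)) - c * (b * x - round (b * x))| := by ring_nf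
      _ ≤ b * distNearestInt (c * x) + c * distNearestInt (b * x) := by
        refine (abs_sub _ _).trans_eq ?_
        rw [abs_mul, abs_mul, Nat.abs_cast, Nat.abs_cast, distNearestInt, distNearestInt]
      _ < 1 := h
  rw [div_eq_div_iff (by positivity) (by positivity)]
  have hR := congrArg (Int.cast : ℤ → ℝ) hint
  push_cast at hR
  linarith

lemma exists_eq_of_tendsto_of_eventually_succ_eq {X : Type*} [TopologicalSpace X] [T2Space X]
    {r : ℕ → X} {x : X} (hr : Tendsto r atTop (𝓝 x)) (h : ∀ᶠ n in atTop, r (n + 1) = r n) :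
    ∃ N, x = r N := by
  obtain ⟨N, hN⟩ := eventuallyConst_atTop.mp (eventuallyConst_atTop_nat.mpr (eventually_atTop.mp h))
  exact ⟨N, tendsto_nhds_unique hr
    (tendsto_const_nhds.congr' (eventually_atTop.mpr ⟨N, fun m hm => (hN m hm).symm⟩))⟩

lemma tendsto_round_mul_div {q b : ℕ → ℕ} {u : ℕ → ℝ} {κ ξ : ℝ} (hq : ∀ n, 0 < q n) (hκ : 0 < κ)
    (hu : Tendsto (fun n => u n * Real.log (q n)) atTop atTop) (hb : ∀ᶠ n in atTop, 1 ≤ b n)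
    (hbd : ∀ᶠ n in atTop, distNearestInt (b n * ξ) ≤ q n ^ (-(κ * u n))) :
    Tendsto (fun n => (round (b n * ξ) : ℝ) / b n) atTop (𝓝 ξ) := by
  have hq₀ : Tendsto (fun n => (q n : ℝ) ^ (-(κ * u n))) atTop (𝓝 0) := by
    simpa using tendsto_rpow_mul_rpow_neg_nhds_zero (Q := fun _ => 1) (κ := 0)
      (fun _ => one_pos) (fun n => Nat.cast_pos.mpr (hq n)) hκ (by simp) hu
  refine tendsto_iff_norm_sub_tendsto_zero.mpr
    (squeeze_zero' (Eventually.of_forall fun _ => norm_nonneg _) ?_ hq₀)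
  filter_upwards [hb, hbd] with n hbn hbdn
  have hbn' : (1 : ℝ) ≤ b n := by exact_mod_cast hbn
  have hdiff : (round (b n * ξ) : ℝ) / b n - ξ = -((b n * ξ - round (b n * ξ)) / b n) := by
    field_simp
    ring
  calc ‖(round (b n * ξ) : ℝ) / b n - ξ‖ = distNearestInt (b n * ξ) / b n := by
        rw [hdiff, norm_neg, norm_div, Real.norm_eq_abs, Real.norm_natCast, distNearestInt]
    _ ≤ distNearestInt (b n * ξ) := div_le_self (abs_nonneg _) hbn'
    _ ≤ _ := hbdn

theorem LSet_inter_LSet_eq_empty {q q' : ℕ → ℕ} {u : ℕ → ℝ} (hq : ∀ n, 0 < q n)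
    (hq' : ∀ n, 0 < q' n)
    (h₁ : (fun n => Real.log (q n)) =o[atTop] fun n => u n * Real.log (q' n))
    (h₂ : (fun n => Real.log (q' n)) =o[atTop] fun n => u n * Real.log (q n))
    (h₃ : (fun n => Real.log (q (n + 1))) =o[atTop] fun n => u n * Real.log (q' n))
    (h₄ : (fun n => Real.log (q' n)) =o[atTop] fun n => u (n + 1) * Real.log (q (n + 1)))
    (hu : Tendsto (fun n => u n * Real.log (q n)) atTop atTop)
    (hu' : Tendsto (fun n => u n * Real.log (q' n)) atTop atTop) :
    LSet q u ∩ LSet q' u = ∅ := by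
  refine Set.eq_empty_of_forall_notMem ?_
  rintro ξ ⟨⟨hirr, κ₁, κ₂, -, hκ₂, b, hb⟩, ⟨-, κ₃, κ₄, -, hκ₄, c, hc⟩⟩
  have hshift := tendsto_add_atTop_nat 1
  have hb₁ : ∀ᶠ n in atTop, 1 ≤ b n := hb.mono fun _ h => h.1
  have hc₁ : ∀ᶠ n in atTop, 1 ≤ c n := hc.mono fun _ h => h.1
  have hbq : ∀ᶠ n in atTop, (b n : ℝ) ≤ q n ^ κ₁ := hb.mono fun _ h => h.2.1
  have hcq : ∀ᶠ n in atTop, (c n : ℝ) ≤ q' n ^ κ₃ := hc.mono fun _ h => h.2.1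
  have hbd : ∀ᶠ n in atTop, distNearestInt (b n * ξ) ≤ q n ^ (-(κ₂ * u n)) :=
    hb.mono fun _ h => h.2.2
  have hcd : ∀ᶠ n in atTop, distNearestInt (c n * ξ) ≤ q' n ^ (-(κ₄ * u n)) :=
    hc.mono fun _ h => h.2.2
  have hd₀ : ∀ t, 0 ≤ distNearestInt t := fun _ => abs_nonneg _
  have k₁ := eventually_mul_lt_of_le_rpow hq hq' hκ₄ one_half_pos h₁ hu' hbq (fun _ => hd₀ _) hcd
  have k₂ := eventually_mul_lt_of_le_rpow hq' hq hκ₂ one_half_pos h₂ hu hcq (fun _ => hd₀ _) hbd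
  have k₃ := eventually_mul_lt_of_le_rpow (fun n => hq (n + 1)) hq' hκ₄ one_half_pos h₃ hu'
    (hshift.eventually hbq) (fun _ => hd₀ _) hcd
  have k₄ := eventually_mul_lt_of_le_rpow hq' (fun n => hq (n + 1)) hκ₂ one_half_pos h₄
    (hu.comp hshift) hcq (fun _ => hd₀ _) (hshift.eventually hbd)
  have hstep : ∀ᶠ n in atTop, (round (b (n + 1) * ξ) : ℝ) / b (n + 1) = round (b n * ξ) / b n := by
    filter_upwards [hb₁, hshift.eventually hb₁, hc₁, k₁, k₂, k₃, k₄] with n hbn hbn' hcn k₁ k₂ k₃ k₄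
    exact ((round_div_eq_round_div hbn hcn (by linarith)).trans
      (round_div_eq_round_div hcn hbn' (by linarith))).symm
  obtain ⟨N, hN⟩ := exists_eq_of_tendsto_of_eventually_succ_eq
    (tendsto_round_mul_div hq hκ₂ hu hb₁ hbd) hstep
  exact hirr ⟨(round (b N * ξ) : ℚ) / b N, by push_cast; exact hN.symm⟩

end Criterion

section Asymptotics

lemma tendsto_natCast_add_one_atTop : Tendsto (fun n : ℕ => (n : ℝ) + 1) atTop atTop :=
  tendsto_atTop_add_const_right _ 1 tendsto_natCast_atTop_atTop

lemma isLittleO_natCast_add_one_rpow {a b : ℝ} (hab : a < b) :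
    (fun n : ℕ => ((n : ℝ) + 1) ^ a) =o[atTop] fun n => ((n : ℝ) + 1) ^ b := by
  rw [isLittleO_iff_tendsto' (Eventually.of_forall fun n h => absurd h (by positivity))]
  refine ((tendsto_rpow_neg_atTop (sub_pos.mpr hab)).comp tendsto_natCast_add_one_atTop).congr
    fun n => ?_
  rw [Function.comp_apply, neg_sub, Real.rpow_sub (by positivity)]

lemma isLittleO_mul_of_le {α : Type*} {l : Filter α} {X Y v : α → ℝ} (hX : ∀ x, 0 ≤ X x)
    (hXY : ∀ x, X x ≤ Y x) (hv : Tendsto v l atTop) : X =o[l] fun x => v x * Y x := by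
  have hXY' : X =O[l] Y := IsBigO.of_bound 1 (Eventually.of_forall fun n => by
    rw [Real.norm_of_nonneg (hX n), Real.norm_of_nonneg ((hX n).trans (hXY n)), one_mul]
    exact hXY n)
  have h1 : (fun _ => (1 : ℝ)) =o[l] v :=
    (isLittleO_one_left_iff ℝ).mpr (tendsto_norm_atTop_atTop.comp hv)
  exact hXY'.trans_isLittleO ((h1.mul_isBigO (isBigO_refl Y _)).congr_left fun n => one_mul _)

end Asymptotics

section Tau

noncomputable def tauExponent (τ : ℝ) (n : ℕ) : ℕ := (n + 1).factorial * ⌊((n : ℝ) + 1) ^ τ⌋₊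

variable {τ σ : ℝ}

lemma one_le_floor_rpow (hτ : 0 ≤ τ) (n : ℕ) : 1 ≤ ⌊((n : ℝ) + 1) ^ τ⌋₊ :=
  Nat.le_floor (by simpa using Real.one_le_rpow (by linarith [n.cast_nonneg (α := ℝ)]) hτ)

lemma tauExponent_pos (hτ : 0 ≤ τ) (n : ℕ) : 0 < tauExponent τ n :=
  Nat.mul_pos (Nat.factorial_pos _) (one_le_floor_rpow hτ n)

lemma tauExponent_growth (hτ : 0 ≤ τ) (n : ℕ) :
    (n + 2) * tauExponent τ n ≤ tauExponent τ (n + 1) := by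
  rw [tauExponent, tauExponent, Nat.factorial_succ (n + 1), ← mul_assoc]
  gcongr
  omega

lemma tauExponent_mono (hτσ : τ ≤ σ) (n : ℕ) : tauExponent τ n ≤ tauExponent σ n := by
  unfold tauExponent
  gcongr
  linarith [n.cast_nonneg (α := ℝ)]

lemma tauExponent_le_succ (hτ : τ ≤ 1) (hσ : 0 ≤ σ) (n : ℕ) :
    tauExponent τ n ≤ tauExponent σ (n + 1) := by
  calc tauExponent τ n ≤ (n + 1).factorial * (n + 1) := by
        unfold tauExponent
        gcongr
        refine Nat.floor_le_of_le ?_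
        push_cast
        simpa using Real.rpow_le_rpow_of_exponent_le
          (by linarith [n.cast_nonneg (α := ℝ)] : (1 : ℝ) ≤ n + 1) hτ
    _ ≤ (n + 2) * ((n + 1).factorial * 1) := by
        rw [mul_one, mul_comm]
        gcongr
        omega
    _ ≤ (n + 2) * tauExponent σ n := by
        unfold tauExponent
        gcongr
        exact one_le_floor_rpow hσ n
    _ ≤ tauExponent σ (n + 1) := tauExponent_growth hσ n

lemma isEquivalent_tauExponent (hτ : 0 < τ) :
    (fun n => (tauExponent τ n : ℝ)) ~[atTop]
      fun n => ((n + 1).factorial : ℝ) * ((n : ℝ) + 1) ^ τ := by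
  have hfloor := isEquivalent_nat_floor.comp_tendsto
    ((tendsto_rpow_atTop hτ).comp tendsto_natCast_add_one_atTop)
  exact (IsEquivalent.refl.mul hfloor).congr_left
    (Eventually.of_forall fun n => by simp [tauExponent])

lemma tauExponent_isLittleO (hτ : 0 < τ) (hσ : 0 < σ) (h : σ < τ + 1) :
    (fun n => (tauExponent σ n : ℝ)) =o[atTop] fun n => ((n : ℝ) + 1) * tauExponent τ n := by
  have hpow : (fun n : ℕ => ((n : ℝ) + 1) ^ σ) =o[atTop]
      fun n => ((n : ℝ) + 1) * ((n : ℝ) + 1) ^ τ :=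
    (isLittleO_natCast_add_one_rpow h).congr_right fun n => by
      rw [Real.rpow_add_one (by positivity), mul_comm]
  exact (isEquivalent_tauExponent hσ).isTheta.trans_isLittleO
    ((((isBigO_refl _ _).mul_isLittleO hpow).congr_right fun n => mul_left_comm _ _ _).trans_isTheta
      ((isTheta_refl _ _).mul (isEquivalent_tauExponent hτ).isTheta.symm))

lemma tauExponent_succ_isLittleO (hσ : 0 < σ) (h : σ < τ) :
    (fun n => (tauExponent σ (n + 1) : ℝ)) =o[atTop] fun n => ((n : ℝ) + 1) * tauExponent τ n := by
  have hshift : (fun n : ℕ => (n : ℝ) + 1 + 1) =O[atTop] fun n => (n : ℝ) + 1 :=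
    IsBigO.of_bound 2 (Eventually.of_forall fun n => by
      rw [Real.norm_of_nonneg (by positivity), Real.norm_of_nonneg (by positivity)]
      linarith [n.cast_nonneg (α := ℝ)])
  have hbig : (fun n => (tauExponent σ (n + 1) : ℝ)) =O[atTop]
      fun n => ((n + 1).factorial : ℝ) * (((n : ℝ) + 1) * ((n : ℝ) + 1) ^ σ) := by
    refine ((isEquivalent_tauExponent hσ).comp_tendsto (tendsto_add_atTop_nat 1)).isBigO.trans ?_
    refine ((isBigO_refl _ _).mul (hshift.mul (hshift.rpow hσ.le
      (Eventually.of_forall fun n => by positivity)))).congr_left fun n => ?_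
    simp only [Function.comp_apply, Nat.factorial_succ (n + 1)]
    push_cast
    ring
  exact hbig.trans_isLittleO
    ((((isBigO_refl _ _).mul_isLittleO ((isBigO_refl _ _).mul_isLittleO
      (isLittleO_natCast_add_one_rpow h))).congr_right fun n => mul_left_comm _ _ _).trans_isTheta
      ((isTheta_refl _ _).mul (isEquivalent_tauExponent (hσ.trans h)).isTheta.symm))

end Tau

section Main

lemma isLittleO_log_pow {a : ℕ} {X Y : ℕ → ℕ} {v : ℕ → ℝ}
    (h : (fun n => (X n : ℝ)) =o[atTop] fun n => v n * Y n) :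
    (fun n => Real.log ((a ^ X n : ℕ) : ℝ)) =o[atTop] fun n => v n * Real.log ((a ^ Y n : ℕ) : ℝ) :=
  (h.mul_isBigO (isBigO_refl (fun _ => Real.log a) _)).congr
    (fun n => by push_cast; rw [Real.log_pow]) (fun n => by push_cast; rw [Real.log_pow, mul_assoc])

lemma tendsto_mul_log_pow {a : ℕ} (ha : 1 < a) {X : ℕ → ℕ} (hX : ∀ n, 0 < X n) :
    Tendsto (fun n : ℕ => ((n : ℝ) + 1) * Real.log ((a ^ X n : ℕ) : ℝ)) atTop atTop := by
  have hlog : 0 < Real.log a := Real.log_pos (by exact_mod_cast ha)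
  refine tendsto_atTop_mono (fun n => ?_) (tendsto_natCast_add_one_atTop.atTop_mul_const hlog)
  push_cast
  rw [Real.log_pow]
  gcongr
  exact le_mul_of_one_le_left hlog.le (by exact_mod_cast hX n)

variable {τ τ₁ τ₂ : ℝ}

lemma LSet_tau_nonempty (hτ : 0 ≤ τ) :
    (LSet (fun n => 2 ^ tauExponent τ n) fun n => (n : ℝ) + 1).Nonempty :=
  ⟨_, lacunarySum_mem_LSet (tauExponent_pos hτ) (tauExponent_growth hτ)⟩

lemma LSet_tau_inter_eq_empty (h1 : 0 < τ₁) (h12 : τ₁ < τ₂) (h2 : τ₂ < 1) :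
    LSet (fun n => 2 ^ tauExponent τ₁ n) (fun n => (n : ℝ) + 1) ∩
      LSet (fun n => 2 ^ tauExponent τ₂ n) (fun n => (n : ℝ) + 1) = ∅ :=
  LSet_inter_LSet_eq_empty (fun _ => by positivity) (fun _ => by positivity)
    (isLittleO_log_pow (isLittleO_mul_of_le (fun _ => by positivity)
      (fun n => by exact_mod_cast tauExponent_mono h12.le n) tendsto_natCast_add_one_atTop))
    (isLittleO_log_pow (tauExponent_isLittleO h1 (h1.trans h12) (by linarith)))
    (isLittleO_log_pow (tauExponent_succ_isLittleO h1 h12))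
    (isLittleO_log_pow (isLittleO_mul_of_le (fun _ => by positivity)
      (fun n => by exact_mod_cast tauExponent_le_succ h2.le h1.le n)
      (tendsto_natCast_add_one_atTop.comp (tendsto_add_atTop_nat 1))))
    (tendsto_mul_log_pow one_lt_two (tauExponent_pos h1.le))
    (tendsto_mul_log_pow one_lt_two (tauExponent_pos (h1.trans h12).le))

end Main

/-- The sets S_{q^{(τ)}} are nonempty and pairwise disjoint for 0 < τ < 1. -/
theorem LSet_tau_disjoint (τ₁ τ₂ : ℝ) (h1 : 0 < τ₁) (h12 : τ₁ < τ₂) (h2 : τ₂ < 1) :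
    (LSet (fun n => 2 ^ ((n + 1).factorial * ⌊((n : ℝ) + 1) ^ τ₁⌋₊))
        (fun n => (n : ℝ) + 1)).Nonempty ∧
    (LSet (fun n => 2 ^ ((n + 1).factorial * ⌊((n : ℝ) + 1) ^ τ₂⌋₊))
        (fun n => (n : ℝ) + 1)).Nonempty ∧
    LSet (fun n => 2 ^ ((n + 1).factorial * ⌊((n : ℝ) + 1) ^ τ₁⌋₊))
        (fun n => (n : ℝ) + 1) ∩
      LSet (fun n => 2 ^ ((n + 1).factorial * ⌊((n : ℝ) + 1) ^ τ₂⌋₊))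
        (fun n => (n : ℝ) + 1) = ∅ :=
  ⟨LSet_tau_nonempty h1.le, LSet_tau_nonempty (h1.trans h12).le, LSet_tau_inter_eq_empty h1 h12 h2⟩
end

section
/- Let q_n = 2^{n!}, q'_n = 2^{(2n)!}, and (λ_n) positive integers with λ_n → ∞ and λ_n/n → 0. Then ξ := Σ_{n≥1} 2^{-(2n-1)!·λ_n} belongs to S_{q'} but not to S_q. -/
open Filter

/-!
Write `A n = (2n+1)! λ_{n+1}`, so that `ξ = ∑ 2^{-A n}`. Since `λ_n = o(n)`, eventually
`A (n+1) - A n ≥ (n+2) (2n+2)!`, hence `2^{A n} ξ = p_n + ε_n` with `p_n` odd and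
`0 < ε_n ≤ 2^{-(n+1) (2n+2)!}`: the denominators `2^{A n} ≤ q'_n` show `ξ ∈ S_{q'}` (and that
`ξ` is irrational). Conversely, if `b ≤ q_{2n}^{κ₁} = 2^{(2n+1)! κ₁}` and
`‖b ξ‖ ≤ q_{2n}^{-κ₂ (2n+1)}`, then `2^{A n} ‖b ξ‖ + b ε_n < 1` because `λ_{n+1} = o(n)`; this forces the integer
`2^{A n} round (b ξ) - b p_n` to vanish, and since `p_n` is odd, `2^{A n} ∣ b`. Thus `λ_{n+1} ≤ κ₁`,
contradicting `λ_n → ∞`.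
-/

open Finset Topology

section DyadicSeries

variable (a : ℕ → ℕ) {n : ℕ}

lemma add_le_of_forall_lt_succ (h : ∀ k ≥ n, a k < a (k + 1)) (i : ℕ) : a n + i ≤ a (n + i) := by
  induction i with
  | zero => rfl
  | succ i ih => have := h (n + i) (by omega); rw [← add_assoc n i 1]; omega

lemma inv_two_pow_le_geometric (h : ∀ k ≥ n, a k < a (k + 1)) (i : ℕ) :
    ((2 : ℝ) ^ a (i + n))⁻¹ ≤ ((2 : ℝ) ^ a n)⁻¹ * (1 / 2) ^ i := by
  rw [one_div, inv_pow, ← mul_inv, ← pow_add, add_comm i]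
  exact inv_anti₀ (by positivity) (pow_le_pow_right₀ one_le_two (add_le_of_forall_lt_succ a h i))

lemma summable_inv_two_pow_nat_add (h : ∀ k ≥ n, a k < a (k + 1)) :
    Summable fun i ↦ ((2 : ℝ) ^ a (i + n))⁻¹ :=
  summable_geometric_two.mul_left _ |>.of_nonneg_of_le (fun _ ↦ by positivity)
    (inv_two_pow_le_geometric a h)

lemma tsum_inv_two_pow_nat_add_le (h : ∀ k ≥ n, a k < a (k + 1)) :
    ∑' i, ((2 : ℝ) ^ a (i + n))⁻¹ ≤ 2 * ((2 : ℝ) ^ a n)⁻¹ :=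
  calc ∑' i, ((2 : ℝ) ^ a (i + n))⁻¹ ≤ ∑' i, ((2 : ℝ) ^ a n)⁻¹ * (1 / 2) ^ i :=
        (summable_inv_two_pow_nat_add a h).tsum_le_tsum (inv_two_pow_le_geometric a h)
          (summable_geometric_two.mul_left _)
    _ = 2 * ((2 : ℝ) ^ a n)⁻¹ := by rw [tsum_mul_left, tsum_geometric_two, mul_comm]

lemma odd_sum_two_pow_sub (hlt : ∀ k < n, a k < a n) :
    Odd (∑ k ∈ range (n + 1), 2 ^ (a n - a k)) := by
  rw [sum_range_succ, Nat.sub_self, pow_zero]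
  refine Even.add_one (even_sum _ fun k hk ↦ ?_)
  have := hlt k (mem_range.1 hk)
  exact (Nat.even_pow' (by omega)).2 even_two

lemma natCast_sum_two_pow_sub (hle : ∀ k ≤ n, a k ≤ a n) :
    ((∑ k ∈ range (n + 1), 2 ^ (a n - a k) : ℕ) : ℝ)
      = 2 ^ a n * ∑ k ∈ range (n + 1), ((2 : ℝ) ^ a k)⁻¹ := by
  push_cast
  rw [mul_sum]
  refine sum_congr rfl fun k hk ↦ ?_
  rw [pow_sub₀ _ two_ne_zero (hle k (by simpa [Nat.lt_succ_iff] using hk))]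

theorem exists_odd_two_pow_mul_tsum_sub_le (hlt : ∀ k < n, a k < a n)
    (hstep : ∀ k ≥ n + 1, a k < a (k + 1)) :
    ∃ p : ℕ, Odd p ∧ 0 < 2 ^ a n * ∑' k, ((2 : ℝ) ^ a k)⁻¹ - p ∧
      2 ^ a n * ∑' k, ((2 : ℝ) ^ a k)⁻¹ - p ≤ 2 ^ ((a n : ℝ) + 1 - a (n + 1)) := by
  have hsum := summable_inv_two_pow_nat_add a hstep
  have hsum' : Summable fun k ↦ ((2 : ℝ) ^ a k)⁻¹ :=
    (summable_nat_add_iff (f := fun k ↦ ((2 : ℝ) ^ a k)⁻¹) (n + 1)).1 hsum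
  have hle : ∀ k ≤ n, a k ≤ a n := fun k hk ↦ by
    rcases hk.eq_or_lt with rfl | hk
    exacts [le_rfl, (hlt k hk).le]
  have hsplit : 2 ^ a n * ∑' k, ((2 : ℝ) ^ a k)⁻¹ - (∑ k ∈ range (n + 1), 2 ^ (a n - a k) : ℕ)
      = 2 ^ a n * ∑' i, ((2 : ℝ) ^ a (i + (n + 1)))⁻¹ := by
    rw [natCast_sum_two_pow_sub a hle, ← hsum'.sum_add_tsum_nat_add (n + 1)]
    ring
  refine ⟨_, odd_sum_two_pow_sub a hlt, ?_, ?_⟩ <;> rw [hsplit]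
  · exact mul_pos (by positivity) (hsum.tsum_pos (fun _ ↦ by positivity) 0 (by positivity))
  · calc 2 ^ a n * ∑' i, ((2 : ℝ) ^ a (i + (n + 1)))⁻¹
        ≤ 2 ^ a n * (2 * ((2 : ℝ) ^ a (n + 1))⁻¹) := by
          gcongr; exact tsum_inv_two_pow_nat_add_le a hstep
      _ = 2 ^ ((a n : ℝ) + 1 - a (n + 1)) := by
          rw [Real.rpow_sub two_pos, Real.rpow_add two_pos, Real.rpow_one, Real.rpow_natCast,
            Real.rpow_natCast]
          ring

lemma eventually_forall_lt_of_forall_lt_succ {N : ℕ} (h : ∀ k ≥ N, a k < a (k + 1)) :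
    ∀ᶠ n in atTop, ∀ k < n, a k < a n := by
  set C := (range N).sup a
  filter_upwards [eventually_ge_atTop (N + C + 1)] with n hn k hk
  by_cases hkN : N ≤ k
  · have := add_le_of_forall_lt_succ a (fun j hj ↦ h j (hkN.trans hj)) (n - k)
    rw [Nat.add_sub_cancel' hk.le] at this
    omega
  · have hN := add_le_of_forall_lt_succ a h (n - N)
    rw [Nat.add_sub_cancel' (by omega)] at hN
    have : a k ≤ C := le_sup (mem_range.2 (by omega))
    omega

end DyadicSeries

theorem irrational_of_eventually_exists_sub_le {ξ : ℝ} {Q : ℕ → ℤ} {δ : ℕ → ℝ}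
    (hδ : Tendsto δ atTop (𝓝 0)) (h : ∀ᶠ n in atTop, ∃ p : ℤ, 0 < Q n * ξ - p ∧ Q n * ξ - p ≤ δ n) :
    Irrational ξ := by
  rintro ⟨x, rfl⟩
  obtain ⟨n, ⟨p, hpos, hle⟩, hδn⟩ :=
    (h.and ((tendsto_order.1 hδ).2 (1 / x.den) (by positivity))).exists
  have hden : (0 : ℝ) < x.den := by positivity
  have hm : ((Q n * x.num - p * x.den : ℤ) : ℝ) = x.den * (Q n * x - p) := by
    rw [Rat.cast_def]; push_cast; field_simp
  have hpos' : 0 < Q n * x.num - p * x.den := by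
    exact_mod_cast hm ▸ mul_pos hden hpos
  have : (1 : ℝ) ≤ x.den * (Q n * x - p) := hm ▸ (by exact_mod_cast hpos')
  rw [lt_div_iff₀ hden] at hδn
  nlinarith

theorem dvd_of_mul_abs_sub_add_mul_abs_sub_lt_one {Q p B : ℕ} {r : ℤ} {ξ : ℝ} (hQp : Q.Coprime p)
    (h : Q * |B * ξ - r| + B * |Q * ξ - p| < 1) : Q ∣ B := by
  have hD : ((Q * r - B * p : ℤ) : ℝ) = Q * (r - B * ξ) + B * (Q * ξ - p) := by push_cast; ring
  have hD0 : (Q * r - B * p : ℤ) = 0 := by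
    rw [← Int.abs_lt_one_iff, ← Int.cast_lt (R := ℝ), Int.cast_abs, hD, Int.cast_one]
    refine (abs_add_le _ _).trans_lt (lt_of_le_of_lt ?_ h)
    rw [abs_mul, abs_mul, abs_sub_comm, Nat.abs_cast, Nat.abs_cast]
  refine hQp.dvd_of_dvd_mul_right (Int.natCast_dvd_natCast.1 ⟨r, ?_⟩)
  push_cast
  linarith

lemma natCast_two_pow_rpow (M : ℕ) (y : ℝ) : ((2 ^ M : ℕ) : ℝ) ^ y = 2 ^ ((M : ℝ) * y) := by
  rw [Nat.cast_pow, Nat.cast_ofNat, ← Real.rpow_natCast, ← Real.rpow_mul zero_le_two]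

lemma two_rpow_mul_two_rpow_le {x y z : ℝ} (h : x + y ≤ z) : (2 : ℝ) ^ x * 2 ^ y ≤ 2 ^ z := by
  rw [← Real.rpow_add two_pos]
  exact Real.rpow_le_rpow_of_exponent_le one_le_two h

lemma eventually_lt_mul_of_tendsto_div {f : ℕ → ℝ} (hf : Tendsto (fun n ↦ f n / n) atTop (𝓝 0))
    {c : ℝ} (hc : 0 < c) : ∀ᶠ m in atTop, f m < c * m := by
  filter_upwards [(tendsto_order.1 hf).2 c hc, eventually_gt_atTop 0] with m hm hm0
  rwa [div_lt_iff₀ (by positivity)] at hm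

/-- `factorialExponent l n` is the paper's `(2m-1)! λ_m` at `m = n + 1`. -/
def factorialExponent (l : ℕ → ℕ) (n : ℕ) : ℕ := (2 * n + 1).factorial * l (n + 1)

section FactorialExponent

variable {l : ℕ → ℕ} {n : ℕ}

lemma factorialExponent_le (h : l (n + 1) ≤ 2 * n + 2) :
    factorialExponent l n ≤ (2 * (n + 1)).factorial := by
  calc factorialExponent l n ≤ (2 * n + 1).factorial * (2 * n + 2) := Nat.mul_le_mul_left _ h
    _ = (2 * (n + 1)).factorial := by rw [mul_comm]; exact (Nat.factorial_succ _).symm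

lemma factorialExponent_add_le (hpos : 0 < l (n + 2)) (h : l (n + 1) ≤ n + 1) :
    factorialExponent l n + (n + 2) * (2 * n + 2).factorial ≤ factorialExponent l (n + 1) := by
  have hfact : (2 * n + 2).factorial = (2 * n + 2) * (2 * n + 1).factorial := Nat.factorial_succ _
  have hfact' : (2 * (n + 1) + 1).factorial = (2 * n + 3) * (2 * n + 2).factorial :=
    Nat.factorial_succ _
  have hA : factorialExponent l n ≤ (n + 1) * (2 * n + 1).factorial := by
    rw [factorialExponent, mul_comm]; gcongr
  have hA' : (2 * n + 3) * (2 * n + 2).factorial ≤ factorialExponent l (n + 1) := by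
    rw [factorialExponent, hfact']; exact Nat.le_mul_of_pos_right _ hpos
  nlinarith [(2 * n + 1).factorial_pos]

end FactorialExponent

section Liouville

variable {l : ℕ → ℕ}

lemma eventually_succ_le_of_tendsto_div (hln : Tendsto (fun n ↦ (l n : ℝ) / n) atTop (𝓝 0)) :
    ∀ᶠ n in atTop, l (n + 1) ≤ n + 1 := by
  filter_upwards [(tendsto_add_atTop_nat 1).eventually
    (eventually_lt_mul_of_tendsto_div hln one_pos)] with n hn
  rw [one_mul] at hn
  exact_mod_cast hn.le

theorem eventually_exists_odd_approx (hlpos : ∀ n, 0 < l n)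
    (hln : Tendsto (fun n ↦ (l n : ℝ) / n) atTop (𝓝 0)) :
    ∀ᶠ n in atTop, ∃ p : ℕ, Odd p ∧
      0 < 2 ^ factorialExponent l n * ∑' k, ((2 : ℝ) ^ factorialExponent l k)⁻¹ - p ∧
      2 ^ factorialExponent l n * ∑' k, ((2 : ℝ) ^ factorialExponent l k)⁻¹ - p
        ≤ 2 ^ (((2 * (n + 1)).factorial : ℝ) * -((n : ℝ) + 1)) := by
  obtain ⟨N, hN⟩ := (eventually_succ_le_of_tendsto_div hln).exists_forall_of_atTop
  have hgap (k : ℕ) (hk : k ≥ N) := factorialExponent_add_le (hlpos (k + 2)) (hN k hk)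
  have hstep (k : ℕ) (hk : k ≥ N) : factorialExponent l k < factorialExponent l (k + 1) := by
    have := hgap k hk
    have := (2 * k + 2).factorial_pos
    nlinarith
  filter_upwards [eventually_forall_lt_of_forall_lt_succ _ hstep, eventually_ge_atTop N]
    with n hlt hn
  obtain ⟨p, hodd, hpos, hle⟩ :=
    exists_odd_two_pow_mul_tsum_sub_le _ hlt fun k hk ↦ hstep k (by omega)
  refine ⟨p, hodd, hpos, hle.trans (Real.rpow_le_rpow_of_exponent_le one_le_two ?_)⟩
  have hgapR : (factorialExponent l n : ℝ) + (n + 2) * (2 * (n + 1)).factorial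
      ≤ factorialExponent l (n + 1) := by exact_mod_cast hgap n hn
  have : (1 : ℝ) ≤ (2 * (n + 1)).factorial := by exact_mod_cast (2 * (n + 1)).factorial_pos
  linarith

theorem irrational_tsum_inv_two_pow_factorialExponent (hlpos : ∀ n, 0 < l n)
    (hln : Tendsto (fun n ↦ (l n : ℝ) / n) atTop (𝓝 0)) :
    Irrational (∑' k, ((2 : ℝ) ^ factorialExponent l k)⁻¹) := by
  have hexp : Tendsto (fun n : ℕ ↦ ((2 * (n + 1)).factorial : ℝ) * -((n : ℝ) + 1)) atTop atBot :=
    tendsto_atBot_mono (fun n ↦ by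
      have : (1 : ℝ) ≤ (2 * (n + 1)).factorial := by exact_mod_cast (2 * (n + 1)).factorial_pos
      simp only [Function.comp_apply]
      nlinarith) (tendsto_neg_atTop_atBot.comp tendsto_natCast_atTop_atTop)
  refine irrational_of_eventually_exists_sub_le (Q := fun n ↦ 2 ^ factorialExponent l n)
    ((tendsto_rpow_atBot_of_base_gt_one 2 one_lt_two).comp hexp) ?_
  filter_upwards [eventually_exists_odd_approx hlpos hln] with n hn
  obtain ⟨p, -, hpos, hle⟩ := hn
  exact ⟨p, by push_cast; exact hpos, by push_cast; exact hle⟩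

theorem tsum_inv_two_pow_factorialExponent_mem_LSet (hlpos : ∀ n, 0 < l n)
    (hln : Tendsto (fun n ↦ (l n : ℝ) / n) atTop (𝓝 0)) :
    ∑' k, ((2 : ℝ) ^ factorialExponent l k)⁻¹
      ∈ LSet (fun n ↦ 2 ^ (2 * (n + 1)).factorial) (fun n ↦ (n : ℝ) + 1) := by
  refine ⟨irrational_tsum_inv_two_pow_factorialExponent hlpos hln, 1, 1, one_pos, one_pos,
    fun n ↦ 2 ^ factorialExponent l n, ?_⟩
  filter_upwards [eventually_exists_odd_approx hlpos hln, eventually_succ_le_of_tendsto_div hln]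
    with n hn hl
  obtain ⟨p, -, hpos, hle⟩ := hn
  refine ⟨Nat.one_le_two_pow, ?_, ?_⟩
  · rw [Real.rpow_one]
    exact_mod_cast Nat.pow_le_pow_right two_pos (factorialExponent_le (by omega))
  · rw [natCast_two_pow_rpow, one_mul]
    push_cast
    calc distNearestInt _ ≤ |2 ^ factorialExponent l n * ∑' k, ((2 : ℝ) ^ factorialExponent l k)⁻¹
          - ((p : ℤ) : ℝ)| := round_le _ _
      _ ≤ _ := by rw [Int.cast_natCast, abs_of_pos hpos]; exact hle

theorem le_of_distNearestInt_le {ξ : ℝ} {n p B : ℕ} {κ₁ κ₂ : ℝ} (hodd : Odd p)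
    (hpos : 0 < 2 ^ factorialExponent l n * ξ - p)
    (hle : 2 ^ factorialExponent l n * ξ - p ≤ 2 ^ (((2 * (n + 1)).factorial : ℝ) * -((n : ℝ) + 1)))
    (hB : 1 ≤ B) (hBle : (B : ℝ) ≤ 2 ^ (((2 * n + 1).factorial : ℝ) * κ₁))
    (hdist : distNearestInt (B * ξ) ≤ 2 ^ (((2 * n + 1).factorial : ℝ) * -(κ₂ * ((2 * n : ℕ) + 1))))
    (hl : (l (n + 1) : ℝ) + 1 ≤ κ₂ * (2 * n + 1)) (hn : κ₁ + 2 ≤ n) :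
    (l (n + 1) : ℝ) ≤ κ₁ := by
  set F : ℝ := ((2 * n + 1).factorial : ℝ)
  have hF : 1 ≤ F := Nat.one_le_cast.2 (2 * n + 1).factorial_pos
  have hA : (factorialExponent l n : ℝ) = F * l (n + 1) := by simp [factorialExponent, F]
  have hG : ((2 * (n + 1)).factorial : ℝ) = (2 * n + 2) * F := by
    rw [show 2 * (n + 1) = 2 * n + 1 + 1 by ring, Nat.factorial_succ]; push_cast; ring
  have hfirst : 2 ^ factorialExponent l n * distNearestInt (B * ξ) ≤ 1 / 2 :=
    calc 2 ^ factorialExponent l n * distNearestInt (B * ξ)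
        ≤ 2 ^ (factorialExponent l n : ℝ) * 2 ^ (F * -(κ₂ * ((2 * n : ℕ) + 1))) := by
          rw [Real.rpow_natCast]; gcongr
      _ ≤ 2 ^ (-1 : ℝ) := two_rpow_mul_two_rpow_le (by rw [hA]; push_cast; nlinarith)
      _ = 1 / 2 := by norm_num
  have hsecond : B * (2 ^ factorialExponent l n * ξ - p) ≤ 1 / 4 :=
    calc B * (2 ^ factorialExponent l n * ξ - p)
        ≤ 2 ^ (F * κ₁) * 2 ^ (((2 * (n + 1)).factorial : ℝ) * -((n : ℝ) + 1)) := by gcongr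
      _ ≤ 2 ^ (-2 : ℝ) := two_rpow_mul_two_rpow_le (by rw [hG]; nlinarith)
      _ = 1 / 4 := by norm_num
  have hdvd : 2 ^ factorialExponent l n ∣ B :=
    dvd_of_mul_abs_sub_add_mul_abs_sub_lt_one (r := round (B * ξ))
      ((Nat.coprime_two_left.2 hodd).pow_left _) (by
        push_cast
        rw [abs_of_pos hpos]
        exact (add_le_add hfirst hsecond).trans_lt (by norm_num))
  have hQB : (2 : ℝ) ^ (factorialExponent l n : ℝ) ≤ 2 ^ (F * κ₁) :=
    calc (2 : ℝ) ^ (factorialExponent l n : ℝ) = ((2 ^ factorialExponent l n : ℕ) : ℝ) := by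
          push_cast; exact Real.rpow_natCast _ _
      _ ≤ B := by exact_mod_cast Nat.le_of_dvd hB hdvd
      _ ≤ 2 ^ (F * κ₁) := hBle
  rw [Real.rpow_le_rpow_left_iff one_lt_two, hA] at hQB
  nlinarith

theorem tsum_inv_two_pow_factorialExponent_not_mem_LSet (hlpos : ∀ n, 0 < l n)
    (hl : Tendsto l atTop atTop) (hln : Tendsto (fun n ↦ (l n : ℝ) / n) atTop (𝓝 0)) :
    ∑' k, ((2 : ℝ) ^ factorialExponent l k)⁻¹
      ∉ LSet (fun n ↦ 2 ^ (n + 1).factorial) (fun n ↦ (n : ℝ) + 1) := by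
  rintro ⟨-, κ₁, κ₂, -, hκ₂, b, hb⟩
  have hb2 := (tendsto_atTop_mono (fun n ↦ show id n ≤ 2 * n by dsimp; omega) tendsto_id :
    Tendsto (2 * ·) atTop atTop).eventually hb
  have hlarge : ∀ᶠ n in atTop, κ₁ < l (n + 1) :=
    ((tendsto_add_atTop_nat 1).eventually (hl.eventually_gt_atTop ⌈κ₁⌉₊)).mono
      fun n hn ↦ Nat.lt_of_ceil_lt hn
  have hsmall : ∀ᶠ n : ℕ in atTop, (l (n + 1) : ℝ) + 1 ≤ κ₂ * (2 * n + 1) := by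
    filter_upwards [(tendsto_add_atTop_nat 1).eventually (eventually_lt_mul_of_tendsto_div hln hκ₂),
      (tendsto_natCast_atTop_atTop.const_mul_atTop hκ₂).eventually_ge_atTop 1] with n h1 h2
    push_cast at h1
    linarith
  obtain ⟨n, ⟨hB, hBle, hdist⟩, ⟨p, hodd, hpos, hle⟩, hκl, hl2, hn⟩ :=
    (hb2.and ((eventually_exists_odd_approx hlpos hln).and (hlarge.and (hsmall.and
      (tendsto_natCast_atTop_atTop.eventually_ge_atTop (κ₁ + 2)))))).exists
  rw [natCast_two_pow_rpow] at hBle hdist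
  exact hκl.not_ge (le_of_distNearestInt_le hodd hpos hle hB hBle hdist hl2 hn)

end Liouville

/-- The number ξ = Σ 2^{-(2n-1)!·λ_n} belongs to S_{q'} but not to S_q,
where q_n = 2^{n!} and q'_n = 2^{(2n)!}. -/
theorem mem_LSet_sub_not_mem (l : ℕ → ℕ) (hlpos : ∀ n, 0 < l n)
    (hl : Filter.Tendsto l Filter.atTop Filter.atTop)
    (hln : Filter.Tendsto (fun n => (l n : ℝ) / n) Filter.atTop (nhds 0)) :
    (∑' n : ℕ, ((2 : ℝ) ^ ((2 * n + 1).factorial * l (n + 1)))⁻¹) ∈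
        LSet (fun n => 2 ^ ((2 * (n + 1)).factorial) : ℕ → ℕ) (fun n => (n : ℝ) + 1) ∧
    (∑' n : ℕ, ((2 : ℝ) ^ ((2 * n + 1).factorial * l (n + 1)))⁻¹) ∉
        LSet (fun n => 2 ^ ((n + 1).factorial) : ℕ → ℕ) (fun n => (n : ℝ) + 1) :=
  ⟨tsum_inv_two_pow_factorialExponent_mem_LSet hlpos hln,
    tsum_inv_two_pow_factorialExponent_not_mem_LSet hlpos hl hln⟩
end

section
/- The set S_{q,u} is not a dense G_δ subset of ℝ; in fact there is a real number t such that S_{q,u} and t + S_{q,u} are disjoint, hence S_{q,u} is not comeager. -/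
/-!
If `ξ` and `ξ - t` both lie in `S_{q,u}`, pick one index `n` at which, with `Q = q n`, both
denominators satisfy `b, c ≤ Q ^ k` while `‖b ξ‖` and `‖c (ξ - t)‖` are below any prescribed
power of `Q`. Since `2bc t = 2c (b ξ) - 2b (c (ξ - t))`, the integer `D = 2bc ≤ Q ^ (2k + 1)`
(the factor `2` makes `D > 1`) satisfies `‖D t‖ ≤ D ^ (-m)` for any given `m`, so `t` is a
Liouville number. Thus for `t = √2` the sets `S_{q,u}` and `t + S_{q,u}` are disjoint, whereas a
comeager set meets its image under any homeomorphism, that image being comeager too.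
-/

open Filter

lemma distNearestInt_two_mul_mul_le (b c : ℕ) (ξ t : ℝ) :
    distNearestInt ((2 * b * c : ℕ) * t) ≤
      2 * c * distNearestInt (b * ξ) + 2 * b * distNearestInt (c * (ξ - t)) := by
  have key : ((2 * b * c : ℕ) : ℝ) * t =
      ((2 * c : ℕ) : ℝ) * (b * ξ) - ((2 * b : ℕ) : ℝ) * (c * (ξ - t)) := by
    push_cast; ring
  rw [key]
  refine (distNearestInt_sub_le _ _).trans (add_le_add ?_ ?_) <;>
    exact_mod_cast distNearestInt_natCast_mul_le _ _

lemma liouville_of_forall_distNearestInt_le {t : ℝ} (ht : Irrational t)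
    (h : ∀ m : ℕ, ∃ D : ℕ, 1 < D ∧ distNearestInt (D * t) ≤ 1 / (D : ℝ) ^ m) :
    Liouville t := by
  intro m
  obtain ⟨D, hD, hdist⟩ := h m
  have hD' : (1 : ℝ) < D := by exact_mod_cast hD
  refine ⟨round (D * t), D, by exact_mod_cast hD, ht.ne_rational _ _, ?_⟩
  have hD0 : (0 : ℝ) < D := by linarith
  calc |t - (round (D * t) : ℤ) / ((D : ℤ) : ℝ)| = distNearestInt (D * t) / D := by
        rw [distNearestInt, Int.cast_natCast, ← abs_of_pos hD0, ← abs_div, abs_of_pos hD0]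
        congr 1; field_simp
    _ ≤ 1 / (D : ℝ) ^ m / D := by gcongr
    _ < 1 / (D : ℝ) ^ m := div_lt_self (by positivity) hD'
    _ = 1 / (((D : ℤ) : ℝ)) ^ m := by rw [Int.cast_natCast]

lemma distNearestInt_two_mul_mul_le_one_div_pow {ξ t : ℝ} {Q b c k m : ℕ} (hQ : 2 ≤ Q)
    (hb : 0 < b) (hc : 0 < c) (hbQ : b ≤ Q ^ k) (hcQ : c ≤ Q ^ k)
    (hbξ : distNearestInt (b * ξ) ≤ 1 / (Q : ℝ) ^ ((2 * k + 1) * m + (k + 2)))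
    (hcη : distNearestInt (c * (ξ - t)) ≤ 1 / (Q : ℝ) ^ ((2 * k + 1) * m + (k + 2))) :
    distNearestInt ((2 * b * c : ℕ) * t) ≤ 1 / ((2 * b * c : ℕ) : ℝ) ^ m := by
  have hD : 2 * b * c ≤ Q ^ (2 * k + 1) :=
    calc 2 * b * c ≤ Q * Q ^ k * Q ^ k := by gcongr
      _ = Q ^ (2 * k + 1) := by ring
  have hQ' : (2 : ℝ) ≤ Q := by exact_mod_cast hQ
  have hsum : 2 * (c : ℝ) + 2 * b ≤ (Q : ℝ) ^ (k + 2) := by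
    have hb' : (b : ℝ) ≤ (Q : ℝ) ^ k := by exact_mod_cast hbQ
    have hc' : (c : ℝ) ≤ (Q : ℝ) ^ k := by exact_mod_cast hcQ
    have : (4 : ℝ) ≤ (Q : ℝ) ^ 2 := by nlinarith
    rw [pow_add]
    nlinarith [pow_nonneg (by positivity : (0 : ℝ) ≤ Q) k]
  calc distNearestInt ((2 * b * c : ℕ) * t)
      ≤ 2 * c * distNearestInt (b * ξ) + 2 * b * distNearestInt (c * (ξ - t)) :=
        distNearestInt_two_mul_mul_le b c ξ t
    _ ≤ (2 * c + 2 * b) * (1 / (Q : ℝ) ^ ((2 * k + 1) * m + (k + 2))) := by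
        rw [add_mul]; gcongr
    _ ≤ (Q : ℝ) ^ (k + 2) * (1 / (Q : ℝ) ^ ((2 * k + 1) * m + (k + 2))) := by gcongr
    _ = 1 / ((Q : ℝ) ^ (2 * k + 1)) ^ m := by
        rw [pow_add _ ((2 * k + 1) * m), pow_mul]; field_simp
    _ ≤ 1 / ((2 * b * c : ℕ) : ℝ) ^ m := by
        gcongr
        exact_mod_cast hD

lemma exists_pow_bound_of_mem_LSet {q : ℕ → ℕ} {u : ℕ → ℝ} (hq : Tendsto q atTop atTop)
    (hu : Tendsto u atTop atTop) {ξ : ℝ} (hξ : ξ ∈ LSet q u) :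
    ∃ (k : ℕ) (b : ℕ → ℕ), ∀ M : ℕ, ∀ᶠ n in atTop,
      1 ≤ b n ∧ b n ≤ q n ^ k ∧ distNearestInt (b n * ξ) ≤ 1 / (q n : ℝ) ^ M := by
  obtain ⟨-, κ₁, κ₂, -, hκ₂, b, hb⟩ := hξ
  refine ⟨⌈κ₁⌉₊, b, fun M => ?_⟩
  filter_upwards [hb, hq.eventually_ge_atTop 1, hu.eventually_ge_atTop (M / κ₂)]
    with n ⟨hb1, hbq, hbd⟩ hq1 hun
  have hq1' : (1 : ℝ) ≤ q n := by exact_mod_cast hq1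
  refine ⟨hb1, ?_, ?_⟩
  · have : (b n : ℝ) ≤ (q n : ℝ) ^ ⌈κ₁⌉₊ :=
      calc (b n : ℝ) ≤ (q n : ℝ) ^ κ₁ := hbq
        _ ≤ (q n : ℝ) ^ (⌈κ₁⌉₊ : ℝ) := Real.rpow_le_rpow_of_exponent_le hq1' (Nat.le_ceil κ₁)
        _ = (q n : ℝ) ^ ⌈κ₁⌉₊ := Real.rpow_natCast _ _
    exact_mod_cast this
  · have hM : (M : ℝ) ≤ κ₂ * u n := (div_le_iff₀' hκ₂).mp hun
    calc distNearestInt (b n * ξ) ≤ (q n : ℝ) ^ (-(κ₂ * u n)) := hbd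
      _ ≤ (q n : ℝ) ^ (-(M : ℝ)) := Real.rpow_le_rpow_of_exponent_le hq1' (neg_le_neg hM)
      _ = 1 / (q n : ℝ) ^ M := by rw [Real.rpow_neg (by positivity), Real.rpow_natCast, one_div]

lemma liouville_of_mem_LSet_of_sub_mem {q : ℕ → ℕ} {u : ℕ → ℝ} (hq : Tendsto q atTop atTop)
    (hu : Tendsto u atTop atTop) {ξ t : ℝ} (ht : Irrational t) (hξ : ξ ∈ LSet q u)
    (hη : ξ - t ∈ LSet q u) : Liouville t := by
  obtain ⟨k₁, b, hb⟩ := exists_pow_bound_of_mem_LSet hq hu hξ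
  obtain ⟨k₂, c, hc⟩ := exists_pow_bound_of_mem_LSet hq hu hη
  refine liouville_of_forall_distNearestInt_le ht fun m => ?_
  let k := max k₁ k₂
  let M := (2 * k + 1) * m + (k + 2)
  obtain ⟨n, ⟨hb1, hbq, hbd⟩, ⟨hc1, hcq, hcd⟩, hq2⟩ :=
    ((hb M).and ((hc M).and (hq.eventually_ge_atTop 2))).exists
  refine ⟨2 * b n * c n, by nlinarith,
    distNearestInt_two_mul_mul_le_one_div_pow hq2 hb1 hc1 ?_ ?_ hbd hcd⟩
  · exact hbq.trans (Nat.pow_le_pow_right (by omega) (le_max_left _ _))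
  · exact hcq.trans (Nat.pow_le_pow_right (by omega) (le_max_right _ _))

lemma disjoint_LSet_image_add {q : ℕ → ℕ} {u : ℕ → ℝ} (hq : Tendsto q atTop atTop)
    (hu : Tendsto u atTop atTop) {t : ℝ} (ht : Irrational t) (hnl : ¬ Liouville t) :
    Disjoint (LSet q u) ((t + ·) '' LSet q u) := by
  refine Set.disjoint_left.mpr ?_
  rintro _ hξ ⟨x, hx, rfl⟩
  exact hnl (liouville_of_mem_LSet_of_sub_mem hq hu ht hξ (by simpa using hx))

lemma notMem_residual_of_disjoint_image {X : Type*} [TopologicalSpace X] [BaireSpace X]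
    [Nonempty X] (h : X ≃ₜ X) {s : Set X} (hs : Disjoint s (h '' s)) : s ∉ residual X := by
  intro hres
  have himage : h '' s ∈ residual X := by
    rw [← h.residual_map_eq]
    exact image_mem_map hres
  simpa [hs.inter_eq] using (dense_of_mem_residual (inter_mem hres himage)).nonempty

lemma not_liouville_sqrt_two : ¬ Liouville (Real.sqrt 2) := by
  intro h
  apply h.transcendental
  refine ⟨Polynomial.X ^ 2 - Polynomial.C 2, Polynomial.X_pow_sub_C_ne_zero (by norm_num) 2, ?_⟩
  have h2 : (Real.sqrt 2) ^ 2 = 2 := Real.sq_sqrt (by norm_num)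
  simp [h2, map_ofNat]

theorem LSet_not_dense_Gdelta_general (q : ℕ → ℕ) (u : ℕ → ℝ)
    (hq : StrictMono q) (hu : Filter.Tendsto u Filter.atTop Filter.atTop) :
    (∃ t : ℝ, LSet q u ∩ ((fun x => t + x) '' LSet q u) = ∅) ∧
    ¬ (IsGδ (LSet q u) ∧ Dense (LSet q u)) ∧
    LSet q u ∉ residual ℝ := by
  have hdisj : Disjoint (LSet q u) ((Real.sqrt 2 + ·) '' LSet q u) :=
    disjoint_LSet_image_add hq.tendsto_atTop hu irrational_sqrt_two not_liouville_sqrt_two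
  have hres : LSet q u ∉ residual ℝ :=
    notMem_residual_of_disjoint_image (Homeomorph.addLeft (Real.sqrt 2)) hdisj
  exact ⟨⟨Real.sqrt 2, hdisj.inter_eq⟩, fun ⟨hG, hd⟩ => hres (residual_of_dense_Gδ hG hd), hres⟩

/-- S_{q,u} is not a dense G_δ: there is t with S_{q,u} ∩ (t + S_{q,u}) = ∅,
and S_{q,u} is not comeager. -/
theorem LSet_not_dense_Gdelta (q : ℕ → ℕ) (u : ℕ → ℝ)
    (hq : StrictMono q) (hqpos : ∀ n, 0 < q n)
    (hupos : ∀ n, 0 < u n) (hu : Filter.Tendsto u Filter.atTop Filter.atTop) :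
    (∃ t : ℝ, LSet q u ∩ ((fun x => t + x) '' LSet q u) = ∅) ∧
    ¬ (IsGδ (LSet q u) ∧ Dense (LSet q u)) ∧
    LSet q u ∉ residual ℝ :=
  LSet_not_dense_Gdelta_general q u hq hu
end
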